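/- arXiv:math/0005013 — 3 statements merged into one kernel-verified Lean document; each statement's English description precedes it below -/
import Mathlib

section
/- Let H be a compact metric space and (fₙ) a uniformly bounded sequence of continuous real-valued functions on H converging pointwise to f. If H^1(f,ε) = ∅ for some ε > 0 (i.e., the oscillation of f at every point is less than ε), then there exists a convex block combination (gₙ) of (fₙ) with ‖gₙ − f‖_H ≤ 3ε for all n; consequently H^1((gₙ),7ε) = ∅. -/
open Filter Topology Set Ordinal

noncomputable section

/-- One step of the oscillation derivation of `A` with respect to `f` and `ε`. -/
def oscStep {K : Type*} [TopologicalSpace K] (f : K → ℝ) (ε : ℝ) (A : Set K) : Set K :=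
  {x ∈ A | ∀ U : Set K, IsOpen U → x ∈ U →
    ∃ x₁ ∈ U ∩ A, ∃ x₂ ∈ U ∩ A, ε ≤ |f x₁ - f x₂|}

/-- The transfinite oscillation derivatives `H^α(f, ε)`. -/
def oscDeriv {K : Type*} [TopologicalSpace K] (f : K → ℝ) (ε : ℝ) (H : Set K) :
    Ordinal → Set K := fun α =>
  Ordinal.limitRecOn α H (fun _ ih => oscStep f ε ih)
    (fun _ _ ih => ⋂ (β : Ordinal) (h : _), ih β h)

/-- One step of the convergence derivation of `A` for a sequence `f`. -/
def seqStep {K : Type*} [TopologicalSpace K] (f : ℕ → K → ℝ) (ε : ℝ) (A : Set K) : Set K :=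
  {x ∈ A | ∀ U : Set K, IsOpen U → x ∈ U → ∀ m : ℕ,
    ∃ n₁ n₂ : ℕ, m < n₂ ∧ n₂ < n₁ ∧ ∃ x' ∈ U ∩ A, ε ≤ |f n₁ x' - f n₂ x'|}

/-- The transfinite convergence derivatives `H^α((fₙ), ε)`. -/
def seqDeriv {K : Type*} [TopologicalSpace K] (f : ℕ → K → ℝ) (ε : ℝ) (H : Set K) :
    Ordinal → Set K := fun α =>
  Ordinal.limitRecOn α H (fun _ ih => seqStep f ε ih)
    (fun _ _ ih => ⋂ (β : Ordinal) (h : _), ih β h)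

open Classical in
/-- The least ordinal at which the family `S` is empty, and `ω₁` if there is none. -/
def emptyIndex {K : Type*} (S : Ordinal → Set K) : Ordinal :=
  if _ : ∃ α, S α = ∅ then sInf {α | S α = ∅} else (Cardinal.aleph 1).ord

/-- The oscillation index `β_H(f, ε)`. -/
def betaEpsOn {K : Type*} [TopologicalSpace K] (f : K → ℝ) (ε : ℝ) (H : Set K) : Ordinal :=
  emptyIndex (oscDeriv f ε H)

/-- The oscillation index `β_H(f)`. -/
def betaOn {K : Type*} [TopologicalSpace K] (f : K → ℝ) (H : Set K) : Ordinal :=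
  ⨆ ε : {e : ℝ // 0 < e}, betaEpsOn f ε.1 H

/-- The oscillation index `β(f)` over the whole space. -/
def beta {K : Type*} [TopologicalSpace K] (f : K → ℝ) : Ordinal :=
  betaOn f Set.univ

/-- The convergence index `γ_H((fₙ), ε)`. -/
def gammaEpsOn {K : Type*} [TopologicalSpace K] (f : ℕ → K → ℝ) (ε : ℝ) (H : Set K) : Ordinal :=
  emptyIndex (seqDeriv f ε H)

/-- The convergence index `γ_H((fₙ))`. -/
def gammaOn {K : Type*} [TopologicalSpace K] (f : ℕ → K → ℝ) (H : Set K) : Ordinal :=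
  ⨆ ε : {e : ℝ // 0 < e}, gammaEpsOn f ε.1 H

/-- The convergence index `γ((fₙ))` over the whole space. -/
def gamma {K : Type*} [TopologicalSpace K] (f : ℕ → K → ℝ) : Ordinal :=
  gammaOn f Set.univ

/-- A function is of Baire class one if it is a pointwise limit of continuous functions. -/
def BaireOne {K : Type*} [TopologicalSpace K] (f : K → ℝ) : Prop :=
  ∃ F : ℕ → K → ℝ, (∀ n, Continuous (F n)) ∧
    ∀ x, Tendsto (fun n => F n x) atTop (nhds (f x))

/-- `f` is of Baire class one on the subspace `F`. -/
def BaireOneOn {K : Type*} [TopologicalSpace K] (f : K → ℝ) (F : Set K) : Prop :=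
  ∃ g : ℕ → F → ℝ, (∀ n, Continuous (g n)) ∧
    ∀ x : F, Tendsto (fun n => g n x) atTop (nhds (f x))

/-- `g` is a convex block combination of `f`. -/
def ConvexBlockOf {K : Type*} (g f : ℕ → K → ℝ) : Prop :=
  ∃ a : ℕ → ℝ, ∃ p : ℕ → ℕ, (∀ k, 0 ≤ a k) ∧ StrictMono p ∧ p 0 = 0 ∧
    (∀ n, ∑ k ∈ Finset.Ioc (p n) (p (n + 1)), a k = 1) ∧
    ∀ n x, g n x = ∑ k ∈ Finset.Ioc (p n) (p (n + 1)), a k * f k x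

end

noncomputable section AuxProof



private lemma sum_Ioc_shift {M : Type*} [AddCommMonoid M] (q m : ℕ) (c : ℕ → M) :
    ∑ k ∈ Finset.Ioc q (q + m), c k = ∑ j ∈ Finset.range m, c (q + 1 + j) := by
  induction m with
  | zero => simp
  | succ m ih =>
      rw [← add_assoc, Finset.sum_Ioc_succ_top (by omega), ih, Finset.sum_range_succ]
      have : q + m + 1 = q + 1 + m := by omega
      rw [this]

private def sTail' {K : Type*} (f : ℕ → K → ℝ) (n : ℕ) (x : K) : ℝ := ⨆ j : ℕ, f (n + j) x

private def IsComboS' {K : Type*} (f : ℕ → K → ℝ) (n : ℕ) (u : K → ℝ) : Prop :=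
  ∃ m : ℕ, ∃ a : ℕ → ℝ, 0 < m ∧ (∀ k, 0 ≤ a k) ∧ (∑ k ∈ Finset.range m, a k = 1) ∧
    ∀ x, u x = ∑ k ∈ Finset.range m, a k * f (n + k) x

private lemma combo_pad {K : Type*} (f : ℕ → K → ℝ) {n j : ℕ} {v : K → ℝ}
    (h : IsComboS' f (n + j) v) : IsComboS' f n v := by
  obtain ⟨m, a, hm, h0, h1, hval⟩ := h
  refine ⟨j + m, fun k => if j ≤ k then a (k - j) else 0, by omega, ?_, ?_, ?_⟩
  · intro k; dsimp only; split
    · exact h0 _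
    · exact le_refl 0
  · rw [Finset.sum_range_add]
    have e1 : ∀ i ∈ Finset.range j, (if j ≤ i then a (i - j) else 0) = 0 := by
      intro i hi; rw [if_neg]; simp at hi; omega
    have e2 : ∀ i ∈ Finset.range m, (if j ≤ j + i then a (j + i - j) else 0) = a i := by
      intro i _; rw [if_pos (by omega)]; congr 1; omega
    rw [Finset.sum_congr rfl e1, Finset.sum_congr rfl e2, Finset.sum_const_zero, zero_add, h1]
  · intro x
    rw [hval x, Finset.sum_range_add]
    have e1 : ∀ i ∈ Finset.range j, (if j ≤ i then a (i - j) else 0) * f (n + i) x = 0 := by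
      intro i hi; rw [if_neg]; · ring
      simp at hi; omega
    have e2 : ∀ i ∈ Finset.range m,
        (if j ≤ j + i then a (j + i - j) else 0) * f (n + (j + i)) x = a i * f (n + j + i) x := by
      intro i _; rw [if_pos (by omega)]
      have h3 : j + i - j = i := by omega
      have h4 : n + (j + i) = n + j + i := by omega
      rw [h3, h4]
    rw [Finset.sum_congr rfl e1, Finset.sum_congr rfl e2, Finset.sum_const_zero, zero_add]

private lemma combo_combine {K : Type*} (f : ℕ → K → ℝ) (n : ℕ) (N : ℕ) (hN : 0 < N)
    (c : ℕ → ℝ) (hc : ∀ i, 0 ≤ c i) (hcs : ∑ i ∈ Finset.range N, c i = 1)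
    (v : ℕ → K → ℝ) (hv : ∀ i, i < N → IsComboS' f n (v i)) :
    IsComboS' f n (fun x => ∑ i ∈ Finset.range N, c i * v i x) := by
  classical
  have hrep : ∀ i, ∃ m : ℕ, ∃ a : ℕ → ℝ, (∀ k, 0 ≤ a k) ∧ (i < N → (0 < m ∧
      (∑ k ∈ Finset.range m, a k = 1) ∧ ∀ x, v i x = ∑ k ∈ Finset.range m, a k * f (n + k) x)) := by
    intro i
    by_cases hi : i < N
    · obtain ⟨m, a, h1, h2, h3, h4⟩ := hv i hi; exact ⟨m, a, h2, fun _ => ⟨h1, h3, h4⟩⟩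
    · exact ⟨1, fun _ => 1, fun _ => zero_le_one, fun h => absurd h hi⟩
  choose mi ai hann hai using hrep
  set m : ℕ := 1 + (Finset.range N).sup mi with hm
  have hmige : ∀ i, i < N → mi i ≤ m := by
    intro i hi
    have : mi i ≤ (Finset.range N).sup mi := Finset.le_sup (Finset.mem_range.mpr hi)
    omega
  set A : ℕ → ℕ → ℝ := fun i k => if k < mi i then ai i k else 0 with hA
  have hAnn : ∀ i k, 0 ≤ A i k := by
    intro i k; simp only [hA]; split
    · exact hann i k
    · exact le_refl 0
  have hAext : ∀ i, i < N → ∑ k ∈ Finset.range m, A i k = 1 := by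
    intro i hi
    rw [← Finset.sum_subset (Finset.range_subset_range.mpr (hmige i hi))
      (by intro k _ hk; simp at hk; simp only [hA]; rw [if_neg (by omega)])]
    rw [← (hai i hi).2.1]
    apply Finset.sum_congr rfl
    intro k hk; simp at hk; simp only [hA]; rw [if_pos hk]
  have hAval : ∀ i x, i < N → v i x = ∑ k ∈ Finset.range m, A i k * f (n + k) x := by
    intro i x hi
    rw [(hai i hi).2.2 x]
    rw [← Finset.sum_subset (Finset.range_subset_range.mpr (hmige i hi))
      (by intro k _ hk; simp at hk; simp only [hA]; rw [if_neg (by omega), zero_mul])]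
    apply Finset.sum_congr rfl
    intro k hk; simp at hk; simp only [hA]; rw [if_pos hk]
  refine ⟨m, fun k => ∑ i ∈ Finset.range N, c i * A i k, by omega, ?_, ?_, ?_⟩
  · intro k; exact Finset.sum_nonneg fun i _ => mul_nonneg (hc i) (hAnn i k)
  · rw [Finset.sum_comm]
    rw [show ∑ i ∈ Finset.range N, ∑ k ∈ Finset.range m, c i * A i k
        = ∑ i ∈ Finset.range N, c i * ∑ k ∈ Finset.range m, A i k by
      apply Finset.sum_congr rfl; intro i _; rw [Finset.mul_sum]]
    rw [Finset.sum_congr rfl fun i hi => by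
      rw [hAext i (Finset.mem_range.mp hi), mul_one]]
    exact hcs
  · intro x
    dsimp only
    rw [Finset.sum_congr rfl fun i hi => by
      rw [hAval i x (Finset.mem_range.mp hi), Finset.mul_sum]]
    rw [Finset.sum_comm]
    apply Finset.sum_congr rfl
    intro k _
    rw [Finset.sum_mul]
    apply Finset.sum_congr rfl
    intro i _; ring




private def VS {K : Type*} [TopologicalSpace K] (f : ℕ → K → ℝ) (B : ℝ) (n : ℕ) :
    Set (K → ℝ) :=
  {u | Continuous u ∧ (∀ x, |u x| ≤ B) ∧ (∀ x, u x ≤ sTail' f n x) ∧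
    ∀ δ, 0 < δ → ∃ v, IsComboS' f n v ∧ ∀ x, |u x - v x| ≤ δ}

private def supv {K : Type*} (u : K → ℝ) : ℝ := ⨆ x, u x

private def cInfS {K : Type*} [TopologicalSpace K] (f : ℕ → K → ℝ) (B : ℝ) (n : ℕ)
    (q : K → ℝ) : ℝ :=
  sInf ((fun u => supv (fun x => q x + (1/2:ℝ)^n * u x)) '' VS f B n)

open Classical in
private def pickS {K : Type*} [TopologicalSpace K] (f : ℕ → K → ℝ) (B δ' : ℝ) (n : ℕ)
    (q : K → ℝ) : K → ℝ :=
  if h : ∃ u, u ∈ VS f B n ∧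
      supv (fun x => q x + (1/2:ℝ)^n * u x) < cInfS f B n q + δ' * (1/4:ℝ)^(n+1)
  then h.choose else f n

private def pSfun {K : Type*} [TopologicalSpace K] (f : ℕ → K → ℝ) (B δ' : ℝ) : ℕ → K → ℝ
  | 0 => fun _ => 0
  | n+1 => fun x => pSfun f B δ' n x + (1/2:ℝ)^(n+1) * pickS f B δ' n (pSfun f B δ' n) x

private def gSfun {K : Type*} [TopologicalSpace K] (f : ℕ → K → ℝ) (B δ' : ℝ) (n : ℕ) : K → ℝ :=
  pickS f B δ' n (pSfun f B δ' n)

private def WSfun {K : Type*} [TopologicalSpace K] (f : ℕ → K → ℝ) (B δ' : ℝ) (n : ℕ)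
    (x : K) : ℝ :=
  ∑' k : ℕ, (1/2:ℝ)^(k+1) * gSfun f B δ' (n+k) x

private lemma geo_sum_val : ∑' k : ℕ, (1/2:ℝ)^(k+1) = 1 := by
  have := tsum_geometric_two' 1
  have e : ∀ k : ℕ, (1:ℝ) / 2 / 2 ^ k = (1/2:ℝ)^(k+1) := by
    intro k
    rw [pow_succ, div_pow, one_pow, div_div]
    ring
  calc ∑' k : ℕ, (1/2:ℝ)^(k+1) = ∑' k : ℕ, (1:ℝ)/2/2^k := tsum_congr fun k => (e k).symm
    _ = 1 := this

private lemma geo_summable : Summable (fun k : ℕ => (1/2:ℝ)^(k+1)) := by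
  have : Summable (fun k : ℕ => (1/2:ℝ) * (1/2)^k) := summable_geometric_two.mul_left _
  apply this.congr
  intro k; rw [pow_succ]; ring

private lemma geo_sum_fin (N : ℕ) : ∑ k ∈ Finset.range N, (1/2:ℝ)^(k+1) = 1 - (1/2)^N := by
  induction N with
  | zero => simp
  | succ N ih => rw [Finset.sum_range_succ, ih, pow_succ]; ring

private lemma simons {K : Type*} [TopologicalSpace K] [CompactSpace K] [Nonempty K]
    (f : ℕ → K → ℝ) (hc : ∀ n, Continuous (f n)) (B : ℝ)
    (hB : ∀ n x, |f n x| ≤ B)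
    (r : ℝ) (hlim : ∀ x, ∀ η, 0 < η → ∃ N, ∀ j, N ≤ j → f j x ≤ r + η)
    (δ : ℝ) (hδ : 0 < δ) :
    ∃ m : ℕ, ∃ a : ℕ → ℝ, 0 < m ∧ (∀ k, 0 ≤ a k) ∧ (∑ k ∈ Finset.range m, a k = 1) ∧
      ∀ x, (∑ k ∈ Finset.range m, a k * f k x) ≤ r + δ := by
  classical
  set δ' : ℝ := δ / 3 with hδ'def
  have hδ' : 0 < δ' := by positivity
  have hB0 : 0 ≤ B := le_trans (abs_nonneg _) (hB 0 (Classical.arbitrary K))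
  -- basic sup facts
  have bddr : ∀ (u : K → ℝ) (C : ℝ), (∀ x, u x ≤ C) → BddAbove (Set.range u) := by
    intro u C h; exact ⟨C, by rintro _ ⟨x, rfl⟩; exact h x⟩
  have le_supv' : ∀ (u : K → ℝ) (C : ℝ), (∀ x, u x ≤ C) → ∀ x, u x ≤ supv u := by
    intro u C h x; exact le_ciSup (bddr u C h) x
  have supv_le' : ∀ (u : K → ℝ) (C : ℝ), (∀ x, u x ≤ C) → supv u ≤ C := by
    intro u C h; exact ciSup_le h
  -- tail sup facts
  have hTbdd : ∀ n x, BddAbove (Set.range fun j => f (n + j) x) := by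
    intro n x; exact ⟨B, by rintro _ ⟨j, rfl⟩; exact (abs_le.mp (hB _ x)).2⟩
  have hT_ub : ∀ n j x, f (n + j) x ≤ sTail' f n x := by
    intro n j x; exact le_ciSup (hTbdd n x) j
  have hT_mono : ∀ n k x, sTail' f (n + k) x ≤ sTail' f n x := by
    intro n k x
    apply ciSup_le
    intro j
    have := hT_ub n (k + j) x
    rwa [← add_assoc] at this
  have hT_le : ∀ n x, sTail' f n x ≤ B := by
    intro n x; exact ciSup_le fun j => (abs_le.mp (hB _ x)).2
  -- Dirac membership
  have hfV : ∀ n, f n ∈ VS f B n := by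
    intro n
    refine ⟨hc n, fun x => hB n x, fun x => by simpa using hT_ub n 0 x, ?_⟩
    intro δ₀ hδ₀
    refine ⟨f n, ⟨1, fun _ => 1, one_pos, fun _ => zero_le_one, by simp, fun x => by simp⟩, ?_⟩
    intro x; simp [le_of_lt hδ₀]

  -- pickS is always in VS
  have hpickV : ∀ n q, pickS f B δ' n q ∈ VS f B n := by
    intro n q
    rw [pickS]
    split
    · next h => exact h.choose_spec.1
    · exact hfV n
  have hVcont : ∀ {n : ℕ} {u : K → ℝ}, u ∈ VS f B n → Continuous u := fun h => h.1
  have hVbd : ∀ {n : ℕ} {u : K → ℝ}, u ∈ VS f B n → ∀ x, |u x| ≤ B := fun h => h.2.1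
  have hVdom : ∀ {n : ℕ} {u : K → ℝ}, u ∈ VS f B n → ∀ x, u x ≤ sTail' f n x :=
    fun h => h.2.2.1
  have hVapp : ∀ {n : ℕ} {u : K → ℝ}, u ∈ VS f B n → ∀ δ₀, 0 < δ₀ →
      ∃ v, IsComboS' f n v ∧ ∀ x, |u x - v x| ≤ δ₀ := fun h => h.2.2.2
  -- p bounded
  have hp_bd : ∀ n x, |pSfun f B δ' n x| ≤ (1 - (1/2:ℝ)^n) * B := by
    intro n
    induction n with
    | zero =>
        intro x
        have e : pSfun f B δ' 0 x = 0 := rfl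
        rw [e]; simp
    | succ n ih =>
        intro x
        have h1 : pSfun f B δ' (n+1) x
            = pSfun f B δ' n x + (1/2:ℝ)^(n+1) * pickS f B δ' n (pSfun f B δ' n) x := rfl
        rw [h1]
        have h2 := hVbd (hpickV n (pSfun f B δ' n)) x
        calc |pSfun f B δ' n x + (1/2:ℝ)^(n+1) * pickS f B δ' n (pSfun f B δ' n) x|
            ≤ |pSfun f B δ' n x| + |(1/2:ℝ)^(n+1) * pickS f B δ' n (pSfun f B δ' n) x| :=
              abs_add_le _ _
          _ ≤ (1 - (1/2)^n)*B + (1/2)^(n+1)*B := by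
              apply add_le_add (ih x)
              rw [abs_mul, abs_of_nonneg (by positivity : (0:ℝ) ≤ (1/2:ℝ)^(n+1))]
              exact mul_le_mul_of_nonneg_left h2 (by positivity)
          _ = (1 - (1/2)^(n+1)) * B := by rw [pow_succ]; ring
  have hp_bdB : ∀ n x, |pSfun f B δ' n x| ≤ B := by
    intro n x
    refine (hp_bd n x).trans ?_
    have hp0 : (0:ℝ) ≤ (1/2:ℝ)^n := by positivity
    nlinarith
  have scale_bd : ∀ (t c : ℝ), 0 ≤ t → t ≤ 1 → |c| ≤ B → |t * c| ≤ B := by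
    intro t c ht ht1 hcb
    rw [abs_mul, abs_of_nonneg ht]
    calc t * |c| ≤ 1 * B := mul_le_mul ht1 hcb (abs_nonneg c) zero_le_one
      _ = B := one_mul B
  have hpow1 : ∀ n : ℕ, (1/2:ℝ)^n ≤ 1 := fun n => pow_le_one₀ (by norm_num) (by norm_num)
  have hpg_bd : ∀ n (u : K → ℝ), (∀ x, |u x| ≤ B) →
      ∀ x, |pSfun f B δ' n x + (1/2:ℝ)^n * u x| ≤ B + B := by
    intro n u hu x
    calc |pSfun f B δ' n x + (1/2:ℝ)^n * u x|
        ≤ |pSfun f B δ' n x| + |(1/2:ℝ)^n * u x| := abs_add_le _ _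
      _ ≤ B + B := add_le_add (hp_bdB n x)
          (scale_bd _ _ (by positivity) (hpow1 n) (hu x))
  -- nonemptiness of the defining set and good choice
  have hSne : ∀ n (q : K → ℝ),
      ((fun u => supv (fun x => q x + (1/2:ℝ)^n * u x)) '' VS f B n).Nonempty :=
    fun n q => ⟨_, ⟨f n, hfV n, rfl⟩⟩
  have hgood : ∀ n, ∃ u, u ∈ VS f B n ∧
      supv (fun x => pSfun f B δ' n x + (1/2:ℝ)^n * u x)
        < cInfS f B n (pSfun f B δ' n) + δ' * (1/4:ℝ)^(n+1) := by
    intro n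
    have hpos : (0:ℝ) < δ' * (1/4:ℝ)^(n+1) := by positivity
    have h := exists_lt_of_csInf_lt (hSne n (pSfun f B δ' n))
      (lt_add_of_pos_right (cInfS f B n (pSfun f B δ' n)) hpos)
    obtain ⟨s, ⟨u, hu, rfl⟩, hlt⟩ := h
    exact ⟨u, hu, hlt⟩
  have hgspec : ∀ n, gSfun f B δ' n ∈ VS f B n ∧
      supv (fun x => pSfun f B δ' n x + (1/2:ℝ)^n * gSfun f B δ' n x)
        < cInfS f B n (pSfun f B δ' n) + δ' * (1/4:ℝ)^(n+1) := by
    intro n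
    have h := hgood n
    have e : gSfun f B δ' n = h.choose := by rw [gSfun, pickS, dif_pos h]
    rw [e]
    exact h.choose_spec
  have hg_bd : ∀ n x, |gSfun f B δ' n x| ≤ B := fun n x => hVbd (hgspec n).1 x
  -- summability
  have hnb : ∀ n x (k : ℕ), ‖(1/2:ℝ)^(k+1) * gSfun f B δ' (n+k) x‖ ≤ B * (1/2:ℝ)^(k+1) := by
    intro n x k
    rw [Real.norm_eq_abs, abs_mul, abs_of_nonneg (by positivity : (0:ℝ) ≤ (1/2:ℝ)^(k+1))]
    calc (1/2:ℝ)^(k+1) * |gSfun f B δ' (n+k) x| ≤ (1/2:ℝ)^(k+1) * B :=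
          mul_le_mul_of_nonneg_left (hg_bd (n+k) x) (by positivity)
      _ = B * (1/2:ℝ)^(k+1) := by ring
  have hsummb : Summable (fun k : ℕ => B * (1/2:ℝ)^(k+1)) := geo_summable.mul_left B
  have hsum : ∀ n x, Summable (fun k : ℕ => (1/2:ℝ)^(k+1) * gSfun f B δ' (n+k) x) := by
    intro n x
    exact Summable.of_norm_bounded hsummb (hnb n x)
  have hW_bd : ∀ n x, |WSfun f B δ' n x| ≤ B := by
    intro n x
    have h1 : Summable fun k : ℕ => ‖(1/2:ℝ)^(k+1) * gSfun f B δ' (n+k) x‖ :=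
      Summable.of_nonneg_of_le (fun k => norm_nonneg _) (hnb n x) hsummb
    have h2 : ‖WSfun f B δ' n x‖ ≤ ∑' k : ℕ, ‖(1/2:ℝ)^(k+1) * gSfun f B δ' (n+k) x‖ :=
      norm_tsum_le_tsum_norm h1
    have h3 : ∑' k : ℕ, ‖(1/2:ℝ)^(k+1) * gSfun f B δ' (n+k) x‖
        ≤ ∑' k : ℕ, B * (1/2:ℝ)^(k+1) := Summable.tsum_le_tsum (hnb n x) h1 hsummb
    have h4 : ∑' k : ℕ, B * (1/2:ℝ)^(k+1) = B := by
      rw [tsum_mul_left, geo_sum_val, mul_one]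
    rw [← Real.norm_eq_abs]
    linarith
  have hW_cont : ∀ n, Continuous (WSfun f B δ' n) := by
    intro n
    exact continuous_tsum
      (fun k => continuous_const.mul (hVcont (hgspec (n+k)).1)) hsummb (fun k x => hnb n x k)
  have hW_rec : ∀ n x, WSfun f B δ' n x
      = (1/2) * gSfun f B δ' n x + (1/2) * WSfun f B δ' (n+1) x := by
    intro n x
    rw [WSfun, Summable.tsum_eq_zero_add (hsum n x)]
    congr 1
    · norm_num
    · rw [WSfun, ← tsum_mul_left]
      apply tsum_congr
      intro k
      have e : n + (k+1) = (n+1) + k := by omega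
      rw [e, pow_succ]
      ring
  have hW_split : ∀ n N x, WSfun f B δ' n x
      = (∑ k ∈ Finset.range N, (1/2:ℝ)^(k+1) * gSfun f B δ' (n+k) x)
        + (1/2:ℝ)^N * WSfun f B δ' (n+N) x := by
    intro n N
    induction N with
    | zero => intro x; simp
    | succ N ih =>
        intro x
        have e : n + (N+1) = (n+N)+1 := by omega
        rw [ih x, hW_rec (n+N) x, Finset.sum_range_succ, e, pow_succ]
        ring
  have hW_dom : ∀ n x, WSfun f B δ' n x ≤ sTail' f n x := by
    intro n x
    rw [WSfun]
    have h1 : ∀ k : ℕ, (1/2:ℝ)^(k+1) * gSfun f B δ' (n+k) x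
        ≤ (1/2:ℝ)^(k+1) * sTail' f n x := by
      intro k
      exact mul_le_mul_of_nonneg_left
        ((hVdom (hgspec (n+k)).1 x).trans (hT_mono n k x)) (by positivity)
    calc ∑' k : ℕ, (1/2:ℝ)^(k+1) * gSfun f B δ' (n+k) x
        ≤ ∑' k : ℕ, (1/2:ℝ)^(k+1) * sTail' f n x :=
          Summable.tsum_le_tsum h1 (hsum n x) (geo_summable.mul_right _)
      _ = sTail' f n x := by rw [tsum_mul_right, geo_sum_val, one_mul]
  -- approximability of W
  have hW_app : ∀ n δ₀, 0 < δ₀ → ∃ v, IsComboS' f n v ∧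
      ∀ x, |WSfun f B δ' n x - v x| ≤ δ₀ := by
    intro n δ₀ hδ₀
    obtain ⟨N, hN⟩ := exists_pow_lt_of_lt_one
      (x := δ₀/(4*B+1)) (y := (1/2:ℝ)) (by positivity) (by norm_num)
    have happ : ∀ k : ℕ, ∃ v, IsComboS' f n v ∧
        ∀ x, |gSfun f B δ' (n+k) x - v x| ≤ δ₀/2 := by
      intro k
      obtain ⟨v, hv1, hv2⟩ := hVapp (hgspec (n+k)).1 (δ₀/2) (by positivity)
      exact ⟨v, combo_pad f hv1, hv2⟩
    choose vk hvk1 hvk2 using happ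
    have hfn : IsComboS' f n (f n) := by
      refine ⟨1, fun _ => 1, one_pos, fun _ => zero_le_one, by simp, fun x => by simp⟩
    set c : ℕ → ℝ := fun i => if i < N then (1/2:ℝ)^(i+1) else (1/2:ℝ)^N with hcdef
    set vf : ℕ → K → ℝ := fun i => if i < N then vk i else f n with hvfdef
    have hcs : ∑ i ∈ Finset.range (N+1), c i = 1 := by
      rw [Finset.sum_range_succ]
      have e1 : ∀ i ∈ Finset.range N, c i = (1/2:ℝ)^(i+1) := by
        intro i hi
        simp only [hcdef]
        rw [if_pos (Finset.mem_range.mp hi)]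
      rw [Finset.sum_congr rfl e1, geo_sum_fin]
      simp only [hcdef]
      rw [if_neg (by omega)]
      ring
    have hcombo : IsComboS' f n (fun x => ∑ i ∈ Finset.range (N+1), c i * vf i x) := by
      apply combo_combine f n (N+1) (by omega) c
        (fun i => by simp only [hcdef]; split <;> positivity) hcs
      intro i hi
      simp only [hvfdef]
      split
      · next h => exact hvk1 i
      · exact hfn
    refine ⟨fun x => ∑ i ∈ Finset.range (N+1), c i * vf i x, hcombo, ?_⟩
    intro x
    have hdiff : WSfun f B δ' n x - ∑ i ∈ Finset.range (N+1), c i * vf i x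
        = (∑ i ∈ Finset.range N, (1/2:ℝ)^(i+1) * (gSfun f B δ' (n+i) x - vk i x))
          + (1/2:ℝ)^N * (WSfun f B δ' (n+N) x - f n x) := by
      rw [hW_split n N x, Finset.sum_range_succ]
      have e1 : ∀ i ∈ Finset.range N, c i * vf i x = (1/2:ℝ)^(i+1) * vk i x := by
        intro i hi
        simp only [hcdef, hvfdef]
        rw [if_pos (Finset.mem_range.mp hi), if_pos (Finset.mem_range.mp hi)]
      rw [Finset.sum_congr rfl e1]
      have e2 : c N * vf N x = (1/2:ℝ)^N * f n x := by
        simp only [hcdef, hvfdef]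
        rw [if_neg (by omega), if_neg (by omega)]
      rw [e2]
      rw [Finset.sum_congr rfl (fun i (_ : i ∈ Finset.range N) =>
        mul_sub ((1/2:ℝ)^(i+1)) (gSfun f B δ' (n+i) x) (vk i x)), Finset.sum_sub_distrib]
      ring
    rw [hdiff]
    have h1 : |∑ i ∈ Finset.range N, (1/2:ℝ)^(i+1) * (gSfun f B δ' (n+i) x - vk i x)|
        ≤ δ₀/2 := by
      calc |∑ i ∈ Finset.range N, (1/2:ℝ)^(i+1) * (gSfun f B δ' (n+i) x - vk i x)|
          ≤ ∑ i ∈ Finset.range N, |(1/2:ℝ)^(i+1) * (gSfun f B δ' (n+i) x - vk i x)| :=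
            Finset.abs_sum_le_sum_abs _ _
        _ ≤ ∑ i ∈ Finset.range N, (1/2:ℝ)^(i+1) * (δ₀/2) := by
            apply Finset.sum_le_sum
            intro i _
            rw [abs_mul, abs_of_nonneg (by positivity : (0:ℝ) ≤ (1/2:ℝ)^(i+1))]
            exact mul_le_mul_of_nonneg_left (hvk2 i x) (by positivity)
        _ = (1 - (1/2:ℝ)^N) * (δ₀/2) := by rw [← Finset.sum_mul, geo_sum_fin]
        _ ≤ δ₀/2 := by nlinarith [pow_nonneg (by norm_num : (0:ℝ) ≤ 1/2) N]
    have h2 : |(1/2:ℝ)^N * (WSfun f B δ' (n+N) x - f n x)| ≤ δ₀/2 := by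
      rw [abs_mul, abs_of_nonneg (by positivity : (0:ℝ) ≤ (1/2:ℝ)^N)]
      have h3 : |WSfun f B δ' (n+N) x - f n x| ≤ 2*B := by
        calc |WSfun f B δ' (n+N) x - f n x|
            ≤ |WSfun f B δ' (n+N) x| + |f n x| := abs_sub _ _
          _ ≤ 2*B := by linarith [hW_bd (n+N) x, hB n x]
      calc (1/2:ℝ)^N * |WSfun f B δ' (n+N) x - f n x| ≤ (1/2:ℝ)^N * (2*B) :=
            mul_le_mul_of_nonneg_left h3 (by positivity)
        _ ≤ (δ₀/(4*B+1)) * (2*B) := by nlinarith [hN, hB0]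
        _ ≤ δ₀/2 := by
            rw [div_mul_eq_mul_div, div_le_div_iff₀ (by positivity) (by norm_num)]
            nlinarith
    calc |(∑ i ∈ Finset.range N, (1/2:ℝ)^(i+1) * (gSfun f B δ' (n+i) x - vk i x))
          + (1/2:ℝ)^N * (WSfun f B δ' (n+N) x - f n x)|
        ≤ |∑ i ∈ Finset.range N, (1/2:ℝ)^(i+1) * (gSfun f B δ' (n+i) x - vk i x)|
          + |(1/2:ℝ)^N * (WSfun f B δ' (n+N) x - f n x)| := abs_add_le _ _
      _ ≤ δ₀ := by linarith
  have hWV : ∀ n, WSfun f B δ' n ∈ VS f B n :=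
    fun n => ⟨hW_cont n, hW_bd n, hW_dom n, hW_app n⟩
  -- total identity
  have hpsucc : ∀ n x, pSfun f B δ' (n+1) x
      = pSfun f B δ' n x + (1/2:ℝ)^(n+1) * gSfun f B δ' n x := fun n x => rfl
  have htot : ∀ n x, WSfun f B δ' 0 x
      = pSfun f B δ' n x + (1/2:ℝ)^n * WSfun f B δ' n x := by
    intro n
    induction n with
    | zero =>
        intro x
        have e : pSfun f B δ' 0 x = 0 := rfl
        rw [e]; simp
    | succ n ih =>
        intro x
        rw [ih x, hW_rec n x, hpsucc n x, pow_succ]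
        ring
  -- maximum point
  obtain ⟨b, -, hbmax⟩ := isCompact_univ.exists_isMaxOn univ_nonempty
    ((hW_cont 0).continuousOn)
  have hGb : ∀ y, WSfun f B δ' 0 y ≤ WSfun f B δ' 0 b := fun y => hbmax (mem_univ y)
  -- step A
  have hA : ∀ n, cInfS f B n (pSfun f B δ' n) ≤ WSfun f B δ' 0 b := by
    intro n
    have hbdd : BddBelow ((fun u => supv (fun x => pSfun f B δ' n x + (1/2:ℝ)^n * u x))
        '' VS f B n) := by
      refine ⟨-(B+B), ?_⟩
      rintro s ⟨u, hu, rfl⟩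
      have x0 : K := Classical.arbitrary K
      have hub : ∀ x, pSfun f B δ' n x + (1/2:ℝ)^n * u x ≤ B + B :=
        fun x => (abs_le.mp (hpg_bd n u (hVbd hu) x)).2
      have h1 := le_supv' (fun x => pSfun f B δ' n x + (1/2:ℝ)^n * u x) (B+B) hub x0
      have h2 : -(B+B) ≤ pSfun f B δ' n x0 + (1/2:ℝ)^n * u x0 :=
        (abs_le.mp (hpg_bd n u (hVbd hu) x0)).1
      exact h2.trans h1
    have hmem : supv (fun x => pSfun f B δ' n x + (1/2:ℝ)^n * WSfun f B δ' n x)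
        ∈ ((fun u => supv (fun x => pSfun f B δ' n x + (1/2:ℝ)^n * u x)) '' VS f B n) :=
      ⟨WSfun f B δ' n, hWV n, rfl⟩
    have h1 : cInfS f B n (pSfun f B δ' n)
        ≤ supv (fun x => pSfun f B δ' n x + (1/2:ℝ)^n * WSfun f B δ' n x) := by
      rw [cInfS]
      exact csInf_le hbdd hmem
    have e : (fun x => pSfun f B δ' n x + (1/2:ℝ)^n * WSfun f B δ' n x)
        = WSfun f B δ' 0 := funext fun x => (htot n x).symm
    rw [e] at h1
    exact h1.trans (supv_le' _ _ hGb)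
  -- step B
  have hBn : ∀ n, gSfun f B δ' n b ≤ WSfun f B δ' n b + (δ'/4) * (1/2:ℝ)^n := by
    intro n
    have h1 : pSfun f B δ' n b + (1/2:ℝ)^n * gSfun f B δ' n b
        ≤ supv (fun x => pSfun f B δ' n x + (1/2:ℝ)^n * gSfun f B δ' n x) :=
      le_supv' _ (B+B) (fun x => (abs_le.mp (hpg_bd n _ (hg_bd n) x)).2) b
    have h2 := (hgspec n).2
    have h3 := hA n
    have h4 := htot n b
    have e4 : δ' * (1/4:ℝ)^(n+1) = (1/2:ℝ)^n * ((δ'/4) * (1/2:ℝ)^n) := by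
      have e5 : ((1:ℝ)/4)^n = (1/2:ℝ)^n * (1/2:ℝ)^n := by rw [← mul_pow]; norm_num
      rw [pow_succ, e5]
      ring
    have h5 : (1/2:ℝ)^n * gSfun f B δ' n b
        < (1/2:ℝ)^n * (WSfun f B δ' n b + (δ'/4) * (1/2:ℝ)^n) := by
      rw [mul_add, ← e4]
      linarith
    have hp0 : (0:ℝ) < (1/2:ℝ)^n := by positivity
    exact le_of_lt ((mul_lt_mul_iff_right₀ hp0).mp h5)
  -- step C
  have hC : ∀ n, WSfun f B δ' n b ≤ WSfun f B δ' (n+1) b + (δ'/4) * (1/2:ℝ)^n := by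
    intro n
    have h1 := hBn n
    have h2 := hW_rec n b
    linarith
  -- step D
  have hD : ∀ N, WSfun f B δ' 0 b ≤ WSfun f B δ' N b + (δ'/2) * (1 - (1/2:ℝ)^N) := by
    intro N
    induction N with
    | zero => simp
    | succ N ih =>
        have h1 := hC N
        have e : (δ'/2) * (1 - (1/2:ℝ)^(N+1))
            = (δ'/2)*(1-(1/2:ℝ)^N) + (δ'/4)*(1/2:ℝ)^N := by
          rw [pow_succ]; ring
        linarith
  -- conclude
  obtain ⟨N₀, hN₀⟩ := hlim b (δ'/2) (by positivity)
  have hTN : sTail' f N₀ b ≤ r + δ'/2 := ciSup_le fun j => hN₀ (N₀ + j) (by omega)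
  have hWN : WSfun f B δ' N₀ b ≤ r + δ'/2 := (hW_dom N₀ b).trans hTN
  have hG : WSfun f B δ' 0 b ≤ r + δ' := by
    have h1 := hD N₀
    have hp : (0:ℝ) ≤ (1/2:ℝ)^N₀ := by positivity
    nlinarith
  have hg0 : ∀ x, gSfun f B δ' 0 x ≤ r + 2*δ' := by
    intro x
    have h1 : pSfun f B δ' 0 x + (1/2:ℝ)^0 * gSfun f B δ' 0 x
        ≤ supv (fun x => pSfun f B δ' 0 x + (1/2:ℝ)^0 * gSfun f B δ' 0 x) :=
      le_supv' _ (B+B) (fun x => (abs_le.mp (hpg_bd 0 _ (hg_bd 0) x)).2) x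
    have h2 := (hgspec 0).2
    have h3 := hA 0
    have e : pSfun f B δ' 0 x = 0 := rfl
    rw [e] at h1
    have e2 : ((1:ℝ)/2)^(0:ℕ) = 1 := by norm_num
    have e3 : δ' * ((1:ℝ)/4)^(0+1) ≤ δ' := by
      have : ((1:ℝ)/4)^(0+1) ≤ 1 := by norm_num
      nlinarith
    rw [e2] at h1
    have h4 := h1.trans (le_of_lt h2)
    nlinarith [hG]
  -- final extraction
  obtain ⟨v, hv1, hv2⟩ := hVapp (hgspec 0).1 δ' hδ'
  obtain ⟨m, a, hm, ha0, ha1, hval⟩ := hv1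
  refine ⟨m, a, hm, ha0, ha1, ?_⟩
  intro x
  have h3 : v x ≤ gSfun f B δ' 0 x + δ' := by
    have := (abs_le.mp (hv2 x)).1
    linarith
  have h4 : v x ≤ r + 3*δ' := by linarith [hg0 x]
  have e : ∑ k ∈ Finset.range m, a k * f k x = v x := by
    rw [hval x]
    apply Finset.sum_congr rfl
    intro k _
    rw [Nat.zero_add]
  rw [e, hδ'def] at *
  linarith [h4]


private lemma twosided {H : Type*} [TopologicalSpace H] [CompactSpace H] [Nonempty H]
    (φ : ℕ → H → ℝ) (hc : ∀ n, Continuous (φ n)) (B : ℝ) (hB : ∀ n x, |φ n x| ≤ B)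
    (ψ : H → ℝ) (r : ℝ) (hψ : ∀ x, |ψ x| ≤ r)
    (hconv : ∀ x, Filter.Tendsto (fun n => φ n x) Filter.atTop (nhds (ψ x)))
    (δ : ℝ) (hδ : 0 < δ) (m₀ : ℕ) :
    ∃ m : ℕ, ∃ a : ℕ → ℝ, 0 < m ∧ (∀ k, 0 ≤ a k) ∧ (∑ k ∈ Finset.range m, a k = 1) ∧
      ∀ x, |∑ k ∈ Finset.range m, a k * φ (m₀ + k) x| ≤ r + δ := by
  classical
  set sgn : Bool → ℝ := fun b => if b then 1 else -1 with hsgn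
  set f : ℕ → (H × Bool) → ℝ := fun n p => sgn p.2 * φ (m₀ + n) p.1 with hfdef
  have hc' : ∀ n, Continuous (f n) := by
    intro n
    have hsgncont : Continuous (fun p : H × Bool => sgn p.2) :=
      Continuous.comp (continuous_of_discreteTopology (f := sgn)) continuous_snd
    exact hsgncont.mul ((hc (m₀ + n)).comp continuous_fst)
  have hsgnabs : ∀ b, |sgn b| = 1 := by
    intro b; rw [hsgn]; cases b <;> simp
  have hB' : ∀ n p, |f n p| ≤ B := by
    intro n p
    rw [hfdef]; dsimp only
    rw [abs_mul, hsgnabs, one_mul]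
    exact hB _ _
  have hlim : ∀ p : H × Bool, ∀ η, 0 < η → ∃ N, ∀ j, N ≤ j → f j p ≤ r + η := by
    intro p η hη
    have := Metric.tendsto_atTop.mp (hconv p.1) η hη
    obtain ⟨N, hN⟩ := this
    refine ⟨N, fun j hj => ?_⟩
    have h1 := hN (m₀ + j) (by omega)
    rw [Real.dist_eq] at h1
    have h2 : |φ (m₀ + j) p.1| ≤ r + η := by
      have := hψ p.1
      have h3 := abs_sub_abs_le_abs_sub (φ (m₀ + j) p.1) (ψ p.1)
      linarith
    calc f j p ≤ |f j p| := le_abs_self _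
      _ = |φ (m₀ + j) p.1| := by rw [hfdef]; dsimp only; rw [abs_mul, hsgnabs, one_mul]
      _ ≤ r + η := h2
  obtain ⟨m, a, hm, ha0, ha1, hax⟩ := simons f hc' B hB' r hlim δ hδ
  refine ⟨m, a, hm, ha0, ha1, ?_⟩
  intro x
  have h1 := hax (x, true)
  have h2 := hax (x, false)
  have e1 : ∑ k ∈ Finset.range m, a k * f k (x, true)
      = ∑ k ∈ Finset.range m, a k * φ (m₀ + k) x := by
    apply Finset.sum_congr rfl
    intro k _
    rw [hfdef]; dsimp only; rw [hsgn]; simp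
  have e2 : ∑ k ∈ Finset.range m, a k * f k (x, false)
      = -∑ k ∈ Finset.range m, a k * φ (m₀ + k) x := by
    rw [← Finset.sum_neg_distrib]
    apply Finset.sum_congr rfl
    intro k _
    rw [hfdef]; dsimp only; rw [hsgn]; simp
  rw [e1] at h1
  rw [e2] at h2
  rw [abs_le]
  constructor <;> linarith


end AuxProof

private lemma seqDeriv_one_empty {H : Type*} [TopologicalSpace H]
    (g : ℕ → H → ℝ) (f : H → ℝ) (ε : ℝ) (hε : 0 < ε)
    (hb : ∀ n x, |g n x - f x| ≤ 3*ε) :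
    seqDeriv g (7*ε) Set.univ 1 = ∅ := by
  have e : seqDeriv g (7*ε) Set.univ 1 = seqStep g (7*ε) Set.univ := by
    unfold seqDeriv
    rw [← Ordinal.succ_zero, Ordinal.limitRecOn_succ, Ordinal.limitRecOn_zero]
  rw [e]
  ext x
  simp only [Set.mem_empty_iff_false, iff_false]
  intro hx
  obtain ⟨-, hx2⟩ := hx
  obtain ⟨n₁, n₂, hlt1, hlt2, x', hx', hge⟩ := hx2 Set.univ isOpen_univ (Set.mem_univ x) 0
  have b1 := hb n₁ x'
  have b2 := hb n₂ x'
  have h6 : |g n₁ x' - g n₂ x'| ≤ 6*ε := by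
    calc |g n₁ x' - g n₂ x'| = |(g n₁ x' - f x') - (g n₂ x' - f x')| := by ring_nf
      _ ≤ |g n₁ x' - f x'| + |g n₂ x' - f x'| := abs_sub _ _
      _ ≤ 6*ε := by linarith
  linarith

theorem statement16 {H : Type*} [MetricSpace H] [CompactSpace H]
    (F : ℕ → H → ℝ) (hcont : ∀ n, Continuous (F n))
    (M : ℝ) (hbd : ∀ n x, |F n x| ≤ M) (f : H → ℝ)
    (hconv : ∀ x, Tendsto (fun n => F n x) atTop (nhds (f x)))
    (ε : ℝ) (hε : 0 < ε) (h1 : oscDeriv f ε Set.univ 1 = ∅) :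
    ∃ g : ℕ → H → ℝ, ConvexBlockOf g F ∧
      (∀ n x, |g n x - f x| ≤ 3 * ε) ∧
      seqDeriv g (7 * ε) Set.univ 1 = ∅ := by
  classical
  have h3e : (3:ℝ) * ε = 3 * ε := rfl
  rcases isEmpty_or_nonempty H with hH | hH
  · refine ⟨fun n x => ∑ k ∈ Finset.Ioc n (n+1), (1:ℝ) * F k x,
      ⟨fun _ => (1:ℝ), fun n => n, fun _ => zero_le_one, strictMono_id, rfl, ?_,
        fun n x => rfl⟩,
      fun n x => (IsEmpty.false x).elim, ?_⟩
    · intro n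
      have := sum_Ioc_shift n 1 (fun _ => (1:ℝ))
      simpa using this
    · exact seqDeriv_one_empty _ f ε hε (fun n x => (IsEmpty.false x).elim)
  · -- the oscillation step is empty
    have h1' : oscStep f ε Set.univ = ∅ := by
      have e : oscDeriv f ε Set.univ 1 = oscStep f ε Set.univ := by
        unfold oscDeriv
        rw [← Ordinal.succ_zero, Ordinal.limitRecOn_succ, Ordinal.limitRecOn_zero]
      rw [← e]; exact h1
    have hosc : ∀ x : H, ∃ U : Set H, IsOpen U ∧ x ∈ U ∧
        ∀ y ∈ U, ∀ z ∈ U, |f y - f z| < ε := by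
      intro x
      by_contra hcon
      push_neg at hcon
      have hmem : x ∈ oscStep f ε Set.univ := by
        refine ⟨Set.mem_univ x, ?_⟩
        intro U hU hxU
        obtain ⟨y, hy, z, hz, hyz⟩ := hcon U hU hxU
        exact ⟨y, ⟨hy, Set.mem_univ y⟩, z, ⟨hz, Set.mem_univ z⟩, hyz⟩
      rw [h1'] at hmem
      exact hmem
    choose U hUopen hUmem hUosc using hosc
    obtain ⟨δL, hδL, hLeb⟩ := lebesgue_number_lemma_of_metric isCompact_univ hUopen
      (fun x _ => Set.mem_iUnion.mpr ⟨x, hUmem x⟩)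
    have hunif : ∀ y z : H, dist y z < δL → |f y - f z| < ε := by
      intro y z hyz
      obtain ⟨i, hi⟩ := hLeb y (Set.mem_univ y)
      exact hUosc i y (hi (Metric.mem_ball_self hδL)) z
        (hi (by rw [Metric.mem_ball, dist_comm]; exact hyz))
    obtain ⟨t, ht⟩ := isCompact_univ.elim_finite_subcover
      (fun x : H => Metric.ball x (δL/2)) (fun x => Metric.isOpen_ball)
      (fun x _ => Set.mem_iUnion.mpr ⟨x, Metric.mem_ball_self (by linarith)⟩)
    set ρ : H → H → ℝ := fun i y => max (δL/2 - dist y i) 0 with hρdef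
    have hρcont : ∀ i, Continuous (ρ i) := by
      intro i
      exact (continuous_const.sub (continuous_id.dist continuous_const)).max continuous_const
    have hρnn : ∀ i y, 0 ≤ ρ i y := fun i y => le_max_right _ _
    set den : H → ℝ := fun y => ∑ i ∈ t, ρ i y with hdendef
    have hdenpos : ∀ y, 0 < den y := by
      intro y
      have hy := ht (Set.mem_univ y)
      rw [Set.mem_iUnion₂] at hy
      obtain ⟨i, hit, hyi⟩ := hy
      rw [Metric.mem_ball] at hyi
      apply Finset.sum_pos' (fun j _ => hρnn j y)
      refine ⟨i, hit, ?_⟩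
      simp only [hρdef]
      exact lt_max_iff.mpr (Or.inl (by linarith))
    have hdencont : Continuous den :=
      continuous_finset_sum t fun i _ => hρcont i
    set hfun : H → ℝ := fun y => (∑ i ∈ t, ρ i y * f i) / den y with hhdef
    have hhcont : Continuous hfun :=
      Continuous.div (continuous_finset_sum t fun i _ => (hρcont i).mul continuous_const)
        hdencont (fun y => (hdenpos y).ne')
    have hfM : ∀ x, |f x| ≤ M := by
      intro x
      have habs : Tendsto (fun n => |F n x|) atTop (nhds |f x|) := (hconv x).abs
      exact le_of_tendsto' habs (fun n => hbd n x)
    have hhf : ∀ y, |hfun y - f y| ≤ ε := by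
      intro y
      have e2 : ∑ i ∈ t, ρ i y * (f i - f y) = (∑ i ∈ t, ρ i y * f i) - f y * den y := by
        simp only [hdendef]
        rw [Finset.mul_sum, ← Finset.sum_sub_distrib]
        exact Finset.sum_congr rfl fun i _ => by ring
      have e : hfun y - f y = (∑ i ∈ t, ρ i y * (f i - f y)) / den y := by
        rw [e2, sub_div, mul_div_cancel_right₀ _ (hdenpos y).ne']
      have hterm : ∀ i ∈ t, |ρ i y * (f i - f y)| ≤ ρ i y * ε := by
        intro i _
        rw [abs_mul, abs_of_nonneg (hρnn i y)]
        rcases eq_or_lt_of_le (hρnn i y) with h0 | h0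
        · rw [← h0]; simp
        · apply mul_le_mul_of_nonneg_left _ (hρnn i y)
          have hlt : dist y i < δL/2 := by
            by_contra hge2
            push_neg at hge2
            have hz : ρ i y = 0 := by
              simp only [hρdef]
              exact max_eq_right (by linarith)
            rw [hz] at h0
            exact lt_irrefl 0 h0
          exact le_of_lt (hunif i y (by rw [dist_comm]; linarith))
      calc |hfun y - f y| = |∑ i ∈ t, ρ i y * (f i - f y)| / den y := by
            rw [e, abs_div, abs_of_pos (hdenpos y)]
        _ ≤ (∑ i ∈ t, ρ i y * ε) / den y := by
            apply (div_le_div_iff_of_pos_right (hdenpos y)).mpr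
            exact (Finset.abs_sum_le_sum_abs _ _).trans (Finset.sum_le_sum hterm)
        _ = ε * den y / den y := by
            rw [← Finset.sum_mul]
            simp only [hdendef]
            ring
        _ = ε := by rw [mul_div_assoc, div_self (hdenpos y).ne', mul_one]
    set φ : ℕ → H → ℝ := fun n y => F n y - hfun y with hφdef
    have hφc : ∀ n, Continuous (φ n) := fun n => (hcont n).sub hhcont
    have hhb : ∀ y, |hfun y| ≤ ε + M := by
      intro y
      calc |hfun y| = |(hfun y - f y) + f y| := by congr 1; ring
        _ ≤ |hfun y - f y| + |f y| := abs_add_le _ _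
        _ ≤ ε + M := add_le_add (hhf y) (hfM y)
    have hφb : ∀ n y, |φ n y| ≤ 2*M + ε := by
      intro n y
      simp only [hφdef]
      calc |F n y - hfun y| ≤ |F n y| + |hfun y| := abs_sub _ _
        _ ≤ M + (ε + M) := add_le_add (hbd n y) (hhb y)
        _ = 2*M + ε := by ring
    set ψ : H → ℝ := fun y => f y - hfun y with hψdef
    have hψb : ∀ y, |ψ y| ≤ ε := by
      intro y
      simp only [hψdef]
      rw [abs_sub_comm]
      exact hhf y
    have hψconv : ∀ y, Tendsto (fun n => φ n y) atTop (nhds (ψ y)) := by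
      intro y
      simp only [hφdef, hψdef]
      exact (hconv y).sub_const (hfun y)
    have hblocks : ∀ q : ℕ, ∃ m : ℕ, ∃ a : ℕ → ℝ, 0 < m ∧ (∀ k, 0 ≤ a k) ∧
        (∑ k ∈ Finset.range m, a k = 1) ∧
        ∀ x, |∑ k ∈ Finset.range m, a k * φ (q + 1 + k) x| ≤ 2*ε := by
      intro q
      obtain ⟨m, a, hm, h0, h1s, hx⟩ :=
        twosided φ hφc (2*M+ε) hφb ψ ε hψb hψconv ε hε (q+1)
      refine ⟨m, a, hm, h0, h1s, fun x => ?_⟩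
      have h4 := hx x
      linarith
    choose Mb ab hMb hab0 hab1 habB using hblocks
    set Q : ℕ → ℕ := fun n => Nat.rec 0 (fun _ acc => acc + Mb acc) n with hQdef
    have hQ0 : Q 0 = 0 := rfl
    have hQs : ∀ n, Q (n+1) = Q n + Mb (Q n) := fun n => rfl
    have hQmono : StrictMono Q := strictMono_nat_of_lt_succ (fun n => by
      rw [hQs]; have := hMb (Q n); omega)
    have hQge : ∀ n, n ≤ Q n := by
      intro n
      induction n with
      | zero => omega
      | succ n ih => rw [hQs]; have := hMb (Q n); omega
    have hex : ∀ k : ℕ, ∃ n, k ≤ Q (n+1) := fun k => ⟨k, by have := hQge (k+1); omega⟩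
    set a : ℕ → ℝ := fun k => ab (Q (Nat.find (hex k))) (k - Q (Nat.find (hex k)) - 1)
      with hadef
    have hkey : ∀ n k, k ∈ Finset.Ioc (Q n) (Q (n+1)) → Nat.find (hex k) = n := by
      intro n k hk
      rw [Finset.mem_Ioc] at hk
      rw [Nat.find_eq_iff]
      refine ⟨hk.2, ?_⟩
      intro m hm
      have h2 : Q (m+1) ≤ Q n := hQmono.monotone (show m + 1 ≤ n by omega)
      omega
    have hanneg : ∀ k, 0 ≤ a k := fun k => hab0 _ _
    set g : ℕ → H → ℝ := fun n x => ∑ k ∈ Finset.Ioc (Q n) (Q (n+1)), a k * F k x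
      with hgdef
    have hblocksum : ∀ (n : ℕ) (c : ℕ → ℝ),
        ∑ k ∈ Finset.Ioc (Q n) (Q (n+1)), a k * c k
          = ∑ j ∈ Finset.range (Mb (Q n)), ab (Q n) j * c (Q n + 1 + j) := by
      intro n c
      rw [hQs n, sum_Ioc_shift]
      apply Finset.sum_congr rfl
      intro j hj
      rw [Finset.mem_range] at hj
      have hmem : Q n + 1 + j ∈ Finset.Ioc (Q n) (Q (n+1)) := by
        rw [Finset.mem_Ioc, hQs n]; omega
      have hn := hkey n _ hmem
      simp only [hadef]
      rw [hn]
      have e : Q n + 1 + j - Q n - 1 = j := by omega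
      rw [e]
    have hgbound : ∀ n x, |g n x - f x| ≤ 3*ε := by
      intro n x
      have e1 : g n x
          = (∑ j ∈ Finset.range (Mb (Q n)), ab (Q n) j * φ (Q n + 1 + j) x) + hfun x := by
        simp only [hgdef]
        rw [hblocksum n (fun k => F k x)]
        have e2 : ∀ j ∈ Finset.range (Mb (Q n)), ab (Q n) j * F (Q n + 1 + j) x
            = ab (Q n) j * φ (Q n + 1 + j) x + ab (Q n) j * hfun x := by
          intro j _
          simp only [hφdef]
          ring
        rw [Finset.sum_congr rfl e2, Finset.sum_add_distrib, ← Finset.sum_mul,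
          hab1 (Q n), one_mul]
      rw [e1, add_sub_assoc]
      have h2 := habB (Q n) x
      have h3 := hhf x
      calc |(∑ j ∈ Finset.range (Mb (Q n)), ab (Q n) j * φ (Q n + 1 + j) x)
            + (hfun x - f x)|
          ≤ |∑ j ∈ Finset.range (Mb (Q n)), ab (Q n) j * φ (Q n + 1 + j) x|
            + |hfun x - f x| := abs_add_le _ _
        _ ≤ 3*ε := by linarith
    refine ⟨g, ⟨a, Q, hanneg, hQmono, hQ0, ?_, fun n x => rfl⟩, hgbound,
      seqDeriv_one_empty g f ε hε hgbound⟩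
    intro n
    have h2 : ∑ j ∈ Finset.range (Mb (Q n)), ab (Q n) j * (1:ℝ) = 1 := by
      simp only [mul_one]
      exact hab1 (Q n)
    have h3 := (hblocksum n (fun _ => (1:ℝ))).trans h2
    simpa using h3
end

section
/- Let K be a compact metric space and f a Baire class one function on K. Then there exists a sequence (fₙ) of continuous real-valued functions on K converging pointwise to f with γ((fₙ)) = β(f). -/
open Filter Topology Set Ordinal
set_option linter.unusedSectionVars false

noncomputable section Aux
namespace Stmt17

open Metric TopologicalSpace Classical

universe u v

variable {K : Type u} [TopologicalSpace K]

/-! ### Generic transfinite derivation -/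

def gder (step : Set K → Set K) (H : Set K) : Ordinal.{v} → Set K := fun α =>
  Ordinal.limitRecOn α H (fun _ ih => step ih)
    (fun _ _ ih => ⋂ (β : Ordinal) (h : _), ih β h)

theorem oscDeriv_eq_gder (f : K → ℝ) (ε : ℝ) (H : Set K) :
    oscDeriv f ε H = gder.{u,v} (oscStep f ε) H := rfl

theorem seqDeriv_eq_gder (F : ℕ → K → ℝ) (ε : ℝ) (H : Set K) :
    seqDeriv F ε H = gder.{u,v} (seqStep F ε) H := rfl

theorem gder_zero (step : Set K → Set K) (H : Set K) : gder.{u,v} step H 0 = H :=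
  Ordinal.limitRecOn_zero ..

theorem gder_succ (step : Set K → Set K) (H : Set K) (α : Ordinal.{v}) :
    gder step H (α + 1) = step (gder step H α) := by
  rw [gder, Ordinal.add_one_eq_succ, Ordinal.limitRecOn_succ]
  rfl

theorem gder_limit (step : Set K → Set K) (H : Set K) {α : Ordinal.{v}}
    (hα : Order.IsSuccLimit α) : gder step H α = ⋂ (β : Ordinal) (_ : β < α), gder step H β := by
  rw [gder, Ordinal.limitRecOn_limit _ _ _ _ hα]
  rfl

theorem oscStep_subset (f : K → ℝ) (ε : ℝ) (A : Set K) : oscStep f ε A ⊆ A :=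
  fun _ hx => hx.1

theorem seqStep_subset (F : ℕ → K → ℝ) (ε : ℝ) (A : Set K) : seqStep F ε A ⊆ A :=
  fun _ hx => hx.1

theorem gder_anti {step : Set K → Set K} (hstep : ∀ A, step A ⊆ A) (H : Set K) :
    ∀ β α : Ordinal.{v}, α ≤ β → gder step H β ⊆ gder step H α := by
  intro β
  induction β using Ordinal.induction with
  | _ β IH =>
    intro α hα
    rcases Ordinal.zero_or_succ_or_isSuccLimit β with h0 | ⟨γ, hγ⟩ | hlim
    · subst h0
      obtain rfl : α = 0 := le_antisymm hα (zero_le (a := α))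
      exact subset_rfl
    · subst hγ
      rcases lt_or_eq_of_le hα with hlt | rfl
      · have hle : α ≤ γ := Order.lt_succ_iff.mp hlt
        have h1 : gder step H (Order.succ γ) ⊆ gder step H γ := by
          rw [← Ordinal.add_one_eq_succ, gder_succ]
          exact hstep _
        exact h1.trans (IH γ (Order.lt_succ γ) α hle)
      · exact subset_rfl
    · rcases lt_or_eq_of_le hα with hlt | rfl
      · rw [gder_limit step H hlim]
        exact Set.iInter₂_subset α hlt
      · exact subset_rfl

theorem gder_isClosed {step : Set K → Set K}
    (hcl : ∀ A, IsClosed A → IsClosed (step A)) {H : Set K} (hH : IsClosed H) :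
    ∀ α : Ordinal.{v}, IsClosed (gder step H α) := by
  intro α
  induction α using Ordinal.induction with
  | _ α IH =>
    rcases Ordinal.zero_or_succ_or_isSuccLimit α with h0 | ⟨γ, hγ⟩ | hlim
    · subst h0; rw [gder_zero]; exact hH
    · subst hγ
      rw [← Ordinal.add_one_eq_succ, gder_succ]
      exact hcl _ (IH γ (Order.lt_succ γ))
    · rw [gder_limit step H hlim]
      exact isClosed_iInter fun β => isClosed_iInter fun hβ => IH β hβ

theorem isClosed_oscStep {f : K → ℝ} {ε : ℝ} {A : Set K} (hA : IsClosed A) :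
    IsClosed (oscStep f ε A) := by
  refine isClosed_of_closure_subset fun x hx => ?_
  have hxA : x ∈ A := hA.closure_eq ▸ (closure_mono (oscStep_subset f ε A)) hx
  refine ⟨hxA, fun U hU hxU => ?_⟩
  rcases mem_closure_iff.mp hx U hU hxU with ⟨y, hyU, hy⟩
  exact hy.2 U hU hyU

/-! ### Baire-type lemma: tame points of closed sets -/

theorem exists_tame_point {K : Type u} [MetricSpace K] [CompactSpace K] {f : K → ℝ} (hf : BaireOne f)
    {P : Set K} (hP : IsClosed P) (hne : P.Nonempty) {δ : ℝ} (hδ : 0 < δ) :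
    ∃ x ∈ P, ∃ U : Set K, IsOpen U ∧ x ∈ U ∧
      ∀ a ∈ U ∩ P, ∀ b ∈ U ∩ P, |f a - f b| < δ := by
  obtain ⟨h, hc, hl⟩ := hf
  haveI : Nonempty P := hne.to_subtype
  haveI : CompleteSpace P := hP.isComplete.completeSpace_coe
  set E : ℕ → Set P := fun N => {x | ∀ n ≥ N, ∀ m ≥ N, |h n ↑x - h m ↑x| ≤ δ / 5} with hE
  have hEclosed : ∀ N, IsClosed (E N) := by
    intro N
    have : E N = ⋂ (n : ℕ) (_ : n ≥ N) (m : ℕ) (_ : m ≥ N),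
        {x : P | |h n ↑x - h m ↑x| ≤ δ / 5} := by
      ext x; simp [hE]
    rw [this]
    refine isClosed_iInter fun n => isClosed_iInter fun _ =>
      isClosed_iInter fun m => isClosed_iInter fun _ => ?_
    exact isClosed_le (by continuity) continuous_const
  have hEcover : ⋃ N, E N = Set.univ := by
    ext x
    simp only [Set.mem_iUnion, Set.mem_univ, iff_true]
    have hcs : CauchySeq fun n => h n ↑x := (hl ↑x).cauchySeq
    rcases Metric.cauchySeq_iff.mp hcs (δ / 5) (by linarith) with ⟨N, hN⟩
    exact ⟨N, fun n hn m hm => by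
      have := hN n hn m hm
      rw [Real.dist_eq] at this
      exact this.le⟩
  obtain ⟨N, hNne⟩ := nonempty_interior_of_iUnion_of_closed hEclosed hEcover
  obtain ⟨x₀, hx₀⟩ := hNne
  rcases isOpen_induced_iff.mp (isOpen_interior : IsOpen (interior (E N))) with ⟨U₀, hU₀open, hpre⟩
  have hx₀U₀ : (x₀ : K) ∈ U₀ := by
    have : x₀ ∈ (((↑·) : P → K) ⁻¹' U₀) := by rw [hpre]; exact hx₀
    exact this
  have hU₀E : ∀ y : P, (y : K) ∈ U₀ → y ∈ E N := by
    intro y hy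
    have : y ∈ (((↑·) : P → K) ⁻¹' U₀) := hy
    rw [hpre] at this
    exact interior_subset this
  have hfh : ∀ y : P, (y : K) ∈ U₀ → |f ↑y - h N ↑y| ≤ δ / 5 := by
    intro y hy
    have hmem := hU₀E y hy
    have htend : Filter.Tendsto (fun n => |h n ↑y - h N ↑y|) Filter.atTop
        (nhds (|f ↑y - h N ↑y|)) := ((hl ↑y).sub tendsto_const_nhds).abs
    refine le_of_tendsto htend ?_
    filter_upwards [Filter.eventually_ge_atTop N] with n hn
    exact hmem n hn N le_rfl
  -- continuity of h N at x₀
  have hcont : ContinuousAt (h N) ↑x₀ := (hc N).continuousAt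
  rcases Metric.continuousAt_iff.mp hcont (δ / 5) (by linarith) with ⟨r, hr, hball⟩
  refine ⟨↑x₀, x₀.2, U₀ ∩ Metric.ball (↑x₀) r, hU₀open.inter Metric.isOpen_ball,
    ⟨hx₀U₀, Metric.mem_ball_self hr⟩, ?_⟩
  rintro a ⟨⟨haU₀, haB⟩, haP⟩ b ⟨⟨hbU₀, hbB⟩, hbP⟩
  have h1 := hfh ⟨a, haP⟩ haU₀
  have h2 := hfh ⟨b, hbP⟩ hbU₀
  have h3 : |h N a - h N ↑x₀| < δ / 5 := by
    have := hball (show dist a ↑x₀ < r from Metric.mem_ball.mp haB)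
    rwa [Real.dist_eq] at this
  have h4 : |h N b - h N ↑x₀| < δ / 5 := by
    have := hball (show dist b ↑x₀ < r from Metric.mem_ball.mp hbB)
    rwa [Real.dist_eq] at this
  have key : |f a - f b| ≤ |f a - h N a| + |h N a - h N ↑x₀| + |h N ↑x₀ - h N b| + |h N b - f b| := by
    have := abs_sub_le (f a) (h N a) (f b)
    have := abs_sub_le (h N a) (h N b) (f b)
    have := abs_sub_le (h N a) (h N ↑x₀) (h N b)
    calc |f a - f b| ≤ |f a - h N a| + |h N a - f b| := abs_sub_le _ _ _
      _ ≤ |f a - h N a| + (|h N a - h N b| + |h N b - f b|) := by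
          have := abs_sub_le (h N a) (h N b) (f b); linarith
      _ ≤ |f a - h N a| + (|h N a - h N ↑x₀| + |h N ↑x₀ - h N b| + |h N b - f b|) := by
          have := abs_sub_le (h N a) (h N ↑x₀) (h N b); linarith
      _ = _ := by ring
  have h5 : |h N ↑x₀ - h N b| < δ / 5 := by rw [abs_sub_comm]; exact h4
  have h1' : |f a - h N a| ≤ δ / 5 := h1
  have h2' : |h N b - f b| ≤ δ / 5 := by rw [abs_sub_comm]; exact h2
  linarith

/-! ### Stages of the oscillation derivation -/

section Stages

variable {K : Type u} [MetricSpace K] [CompactSpace K] {f : K → ℝ}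

theorem osc_isClosed (f : K → ℝ) (ε : ℝ) (α : Ordinal.{v}) :
    IsClosed (oscDeriv f ε Set.univ α) := by
  rw [oscDeriv_eq_gder]
  exact gder_isClosed (fun A hA => isClosed_oscStep hA) isClosed_univ α

theorem osc_exists_leave (hf : BaireOne f) {ε : ℝ} (hε : 0 < ε) {α : Ordinal.{v}}
    (hne : (oscDeriv f ε Set.univ α).Nonempty) :
    ∃ x ∈ oscDeriv f ε Set.univ α, x ∉ oscDeriv f ε Set.univ (α + 1) ∧
      ∃ U, IsOpen U ∧ x ∈ U ∧ ∀ a ∈ U ∩ oscDeriv f ε Set.univ α,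
        ∀ b ∈ U ∩ oscDeriv f ε Set.univ α, |f a - f b| < ε := by
  obtain ⟨x, hxP, U, hUopen, hxU, hU⟩ :=
    exists_tame_point hf (osc_isClosed f ε α) hne hε
  refine ⟨x, hxP, ?_, U, hUopen, hxU, hU⟩
  rw [oscDeriv_eq_gder.{u,v}, gder_succ]
  rintro ⟨-, h⟩
  obtain ⟨x₁, hx₁, x₂, hx₂, hle⟩ := h U hUopen hxU
  exact absurd hle (not_le.mpr (hU x₁ hx₁ x₂ hx₂))

theorem osc_stages_countable (hf : BaireOne f) {ε : ℝ} (hε : 0 < ε) :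
    {α : Ordinal.{v} | oscDeriv f ε Set.univ α ≠ ∅}.Countable := by
  set s := {α : Ordinal.{v} | oscDeriv f ε Set.univ α ≠ ∅} with hs
  have hchoice : ∀ α ∈ s, ∃ b ∈ countableBasis K,
      (b ∩ oscDeriv f ε Set.univ α).Nonempty ∧ b ∩ oscDeriv f ε Set.univ (α + 1) = ∅ := by
    intro α hα
    obtain ⟨x, hx, hxnot, U, hUopen, hxU, hU⟩ :=
      osc_exists_leave hf hε (Set.nonempty_iff_ne_empty.mpr hα)
    have hopen : IsOpen ((oscDeriv f ε Set.univ (α + 1))ᶜ) := (osc_isClosed f ε _).isOpen_compl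
    obtain ⟨b, hb, hxb, hbsub⟩ :=
      (isBasis_countableBasis K).exists_subset_of_mem_open hxnot hopen
    refine ⟨b, hb, ⟨x, hxb, hx⟩, ?_⟩
    rw [Set.eq_empty_iff_forall_notMem]
    rintro y ⟨hyb, hy⟩
    exact hbsub hyb hy
  choose! b hbmem hbne hbdisj using hchoice
  have key : ∀ α ∈ s, ∀ α' ∈ s, α < α' → b α ≠ b α' := by
    intro α hα α' hα' hlt heq
    have hsub : oscDeriv f ε Set.univ α' ⊆ oscDeriv f ε Set.univ (α + 1) := by
      rw [oscDeriv_eq_gder.{u,v}]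
      exact gder_anti (oscStep_subset f ε) _ α' (α + 1)
        (Ordinal.add_one_eq_succ α ▸ Order.succ_le_of_lt hlt)
    obtain ⟨y, hyb, hy⟩ := hbne α' hα'
    have hmem : y ∈ b α ∩ oscDeriv f ε Set.univ (α + 1) := ⟨heq ▸ hyb, hsub hy⟩
    rw [hbdisj α hα] at hmem
    exact hmem
  have hinj : Set.InjOn b s := by
    intro α hα α' hα' heq
    by_contra hne'
    rcases Ne.lt_or_gt hne' with hlt | hlt
    · exact key α hα α' hα' hlt heq
    · exact key α' hα' α hα hlt heq.symm
  exact Set.countable_of_injective_of_countable_image hinj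
    ((countable_countableBasis K).mono (Set.image_subset_iff.mpr fun α hα => hbmem α hα))

theorem osc_eventually_empty (hf : BaireOne f) {ε : ℝ} (hε : 0 < ε) :
    ∃ α : Ordinal.{v}, oscDeriv f ε Set.univ α = ∅ := by
  by_contra h
  push_neg at h
  have huniv : {α : Ordinal.{v} | oscDeriv f ε Set.univ α ≠ ∅} = Set.univ := by
    ext α
    simp only [Set.mem_setOf_eq, Set.mem_univ, iff_true]
    exact (h α).ne_empty
  have hcount : (Set.univ : Set Ordinal.{v}).Countable :=
    huniv ▸ osc_stages_countable hf hε
  haveI : Countable Ordinal.{v} := Set.countable_univ_iff.mp hcount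
  obtain ⟨g, hg⟩ := exists_injective_nat Ordinal.{v}
  exact not_small_ordinal.{v} (small_of_injective hg)

theorem osc_exit (hf : BaireOne f) {ε : ℝ} (hε : 0 < ε) (x : K) :
    ∃ α : Ordinal.{v}, x ∈ oscDeriv f ε Set.univ α ∧ x ∉ oscDeriv f ε Set.univ (α + 1) := by
  obtain ⟨σ₀, hσ₀⟩ := osc_eventually_empty.{u,v} hf hε
  set s := {β : Ordinal.{v} | x ∉ oscDeriv f ε Set.univ β} with hs
  have hsne : s.Nonempty := ⟨σ₀, by simp [hs, hσ₀]⟩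
  have hσs : sInf s ∈ s := csInf_mem hsne
  have hlt : ∀ β < sInf s, x ∈ oscDeriv f ε Set.univ β := by
    intro β hβ
    by_contra hβ'
    exact absurd (csInf_le (OrderBot.bddBelow s) hβ') (not_le.mpr hβ)
  rcases Ordinal.zero_or_succ_or_isSuccLimit (sInf s) with h0 | ⟨γ, hγ⟩ | hlim
  · exfalso; apply hσs; rw [h0, oscDeriv_eq_gder.{u,v}, gder_zero]; exact Set.mem_univ x
  · refine ⟨γ, hlt γ (hγ ▸ Order.lt_succ γ), ?_⟩
    rw [Ordinal.add_one_eq_succ, hγ]; exact hσs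
  · exfalso
    apply hσs
    rw [oscDeriv_eq_gder.{u,v}, gder_limit _ _ hlim]
    exact Set.mem_iInter₂.mpr fun β hβ => hlt β hβ

end Stages

/-! ### Tame sets and slices -/

section Slices

variable {K : Type u} [MetricSpace K]

def tameSet (f : K → ℝ) (δ : ℝ) (C : Set K) : Set K :=
  {y | ∃ U, IsOpen U ∧ y ∈ U ∧ ∀ a ∈ U ∩ C, ∀ b ∈ U ∩ C, |f a - f b| < δ}

def sliceO (W : Set K) (s : ℕ) : Set K := {y | ∀ z ∈ Wᶜ, 1/(s+1 : ℝ) < dist y z}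

def sliceC (W : Set K) (s : ℕ) : Set K := {y | ∀ z ∈ Wᶜ, 1/(s+1 : ℝ) ≤ dist y z}

theorem sliceO_subset_sliceC {W : Set K} {s : ℕ} : sliceO W s ⊆ sliceC W s :=
  fun y hy z hz => (hy z hz).le

theorem sliceC_subset (W : Set K) (s : ℕ) : sliceC W s ⊆ W := by
  intro y hy
  by_contra hyW
  have h1 := hy y hyW
  rw [dist_self] at h1
  have h2 : (0:ℝ) < 1/(s+1:ℝ) := by positivity
  linarith

theorem isClosed_sliceC (W : Set K) (s : ℕ) : IsClosed (sliceC W s) := by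
  have heq : sliceC W s = ⋂ z ∈ Wᶜ, {y | 1/(s+1:ℝ) ≤ dist y z} := by
    ext y; simp [sliceC]
  rw [heq]
  exact isClosed_biInter fun z _ =>
    isClosed_le continuous_const (continuous_id.dist continuous_const)

theorem isOpen_sliceO [CompactSpace K] {W : Set K} (hWo : IsOpen W) (s : ℕ) :
    IsOpen (sliceO W s) := by
  by_cases hW : (Wᶜ : Set K) = ∅
  · have heq : sliceO W s = Set.univ := by
      ext y; simp [sliceO, hW]
    rw [heq]; exact isOpen_univ
  · have hWc : (Wᶜ : Set K).Nonempty := Set.nonempty_iff_ne_empty.mpr hW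
    have hcpt : IsCompact (Wᶜ : Set K) := hWo.isClosed_compl.isCompact
    have heq : sliceO W s = (fun y => Metric.infDist y Wᶜ) ⁻¹' (Set.Ioi (1/(s+1:ℝ))) := by
      ext y
      simp only [sliceO, Set.mem_setOf_eq, Set.mem_preimage, Set.mem_Ioi]
      constructor
      · intro h
        obtain ⟨z, hz, hzeq⟩ := hcpt.exists_infDist_eq_dist hWc y
        rw [hzeq]; exact h z hz
      · intro h z hz
        exact lt_of_lt_of_le h (Metric.infDist_le_dist_of_mem hz)
    rw [heq]
    exact isOpen_Ioi.preimage (Metric.continuous_infDist_pt _)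

theorem subset_tameSet {f : K → ℝ} {δ : ℝ} {C U : Set K} (hU : IsOpen U)
    (h : ∀ a ∈ U ∩ C, ∀ b ∈ U ∩ C, |f a - f b| < δ) : U ⊆ tameSet f δ C :=
  fun _ hy => ⟨U, hU, hy, h⟩

theorem isOpen_tameSet {f : K → ℝ} {δ : ℝ} {C : Set K} : IsOpen (tameSet f δ C) :=
  isOpen_iff_forall_mem_open.mpr fun _ ⟨U, hU, hyU, h⟩ => ⟨U, subset_tameSet hU h, hU, hyU⟩

theorem iUnion_sliceO {W : Set K} (hW : IsOpen W) : (⋃ s, sliceO W s) = W := by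
  apply Set.Subset.antisymm
  · exact Set.iUnion_subset fun s => sliceO_subset_sliceC.trans (sliceC_subset W s)
  · intro y hy
    obtain ⟨ρ, hρ, hball⟩ := Metric.isOpen_iff.mp hW y hy
    obtain ⟨n, hn⟩ := exists_nat_one_div_lt hρ
    refine Set.mem_iUnion.mpr ⟨n, fun z hz => ?_⟩
    have hz' : z ∉ Metric.ball y ρ := fun h => hz (hball h)
    rw [Metric.mem_ball] at hz'
    push_neg at hz'
    calc 1/(n+1:ℝ) < ρ := hn
      _ ≤ dist z y := hz'
      _ = dist y z := dist_comm z y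

end Slices

/-! ### The gluing construction -/

section Glue

variable {K : Type u} [MetricSpace K] [CompactSpace K] (f : K → ℝ)

def Creq (q : ℕ × Ordinal.{v} × ℕ) : Set K := oscDeriv f (1/(q.1+1 : ℝ)) Set.univ q.2.1

def Dreq (q : ℕ × Ordinal.{v} × ℕ) : Set K :=
  sliceC (tameSet f (1/(q.1+1 : ℝ)) (Creq f q)) q.2.2 ∩ Creq f q

def Oreq (q : ℕ × Ordinal.{v} × ℕ) : Set K :=
  sliceO (tameSet f (1/(q.1+1 : ℝ)) (Creq f q)) q.2.2

theorem isClosed_Creq (q : ℕ × Ordinal.{v} × ℕ) : IsClosed (Creq f q) :=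
  osc_isClosed f _ _

theorem isClosed_Dreq (q : ℕ × Ordinal.{v} × ℕ) : IsClosed (Dreq f q) :=
  (isClosed_sliceC _ _).inter (isClosed_Creq f q)

theorem isOpen_Oreq (q : ℕ × Ordinal.{v} × ℕ) : IsOpen (Oreq f q) :=
  isOpen_sliceO isOpen_tameSet _

theorem Dreq_tame (q : ℕ × Ordinal.{v} × ℕ) :
    ∀ y ∈ Dreq f q, ∃ U, IsOpen U ∧ y ∈ U ∧
      ∀ a ∈ U ∩ Creq f q, ∀ b ∈ U ∩ Creq f q, |f a - f b| < 1/(q.1+1:ℝ) := by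
  intro y hy
  have h1 : y ∈ tameSet f (1/(q.1+1:ℝ)) (Creq f q) :=
    sliceC_subset (tameSet f (1/(q.1+1:ℝ)) (Creq f q)) q.2.2 hy.1
  exact h1

theorem exists_glue (Q : Finset (ℕ × Ordinal.{v} × ℕ)) :
    ∃ g : K → ℝ, Continuous g ∧ ∀ q ∈ Q, ∀ y ∈ Dreq f q, |g y - f y| ≤ 1/(q.1+1 : ℝ) := by
  classical
  have hnbhd : ∀ y : K, ∃ N : Set K, IsOpen N ∧ y ∈ N ∧ ∀ q ∈ Q,
      (y ∉ Dreq f q → N ∩ Dreq f q = ∅) ∧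
      (y ∈ Dreq f q → ∀ z ∈ N ∩ Creq f q, |f z - f y| < 1/(q.1+1 : ℝ)) := by
    intro y
    induction Q using Finset.induction_on with
    | empty => exact ⟨Set.univ, isOpen_univ, Set.mem_univ y, by simp⟩
    | insert q Q' hq IH =>
      obtain ⟨N, hNo, hyN, hN⟩ := IH
      by_cases hyD : y ∈ Dreq f q
      · obtain ⟨U, hUo, hyU, hU⟩ := Dreq_tame f q y hyD
        refine ⟨N ∩ U, hNo.inter hUo, ⟨hyN, hyU⟩, ?_⟩
        intro q' hq'
        rcases Finset.mem_insert.mp hq' with rfl | hq'Q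
        · refine ⟨fun h => absurd hyD h, fun _ z hz => ?_⟩
          exact hU z ⟨hz.1.2, hz.2⟩ y ⟨hyU, hyD.2⟩
        · refine ⟨fun h => ?_, fun h z hz => (hN q' hq'Q).2 h z ⟨hz.1.1, hz.2⟩⟩
          have h0 := (hN q' hq'Q).1 h
          rw [Set.eq_empty_iff_forall_notMem] at h0 ⊢
          exact fun z hz => h0 z ⟨hz.1.1, hz.2⟩
      · refine ⟨N ∩ (Dreq f q)ᶜ, hNo.inter (isClosed_Dreq f q).isOpen_compl, ⟨hyN, hyD⟩, ?_⟩
        intro q' hq'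
        rcases Finset.mem_insert.mp hq' with rfl | hq'Q
        · refine ⟨fun _ => ?_, fun h => absurd h hyD⟩
          rw [Set.eq_empty_iff_forall_notMem]
          rintro z ⟨⟨-, hz2⟩, hzD⟩
          exact hz2 hzD
        · refine ⟨fun h => ?_, fun h z hz => (hN q' hq'Q).2 h z ⟨hz.1.1, hz.2⟩⟩
          have h0 := (hN q' hq'Q).1 h
          rw [Set.eq_empty_iff_forall_notMem] at h0 ⊢
          exact fun z hz => h0 z ⟨hz.1.1, hz.2⟩
  choose N hNopen hmemN hNprop using hnbhd
  obtain ⟨t, ht⟩ := isCompact_univ.elim_finite_subcover N hNopen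
    (fun y _ => Set.mem_iUnion.mpr ⟨y, hmemN y⟩)
  set ψ : K → K → ℝ := fun a =>
    if (N a)ᶜ = ∅ then (fun _ => 1) else (fun y => Metric.infDist y (N a)ᶜ) with hψ
  have hψcont : ∀ a, Continuous (ψ a) := by
    intro a; rw [hψ]; dsimp only
    split_ifs
    · exact continuous_const
    · exact Metric.continuous_infDist_pt _
  have hψnonneg : ∀ a y, 0 ≤ ψ a y := by
    intro a y; rw [hψ]; dsimp only; split_ifs
    · exact zero_le_one
    · exact Metric.infDist_nonneg
  have hψpos : ∀ a y, y ∈ N a → 0 < ψ a y := by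
    intro a y hy; rw [hψ]; dsimp only; split_ifs with h
    · exact one_pos
    · have hcl : IsClosed ((N a)ᶜ) := (hNopen a).isClosed_compl
      refine (hcl.notMem_iff_infDist_pos (Set.nonempty_iff_ne_empty.mpr h)).mp ?_
      simpa using hy
  have hψzero : ∀ a y, y ∉ N a → ψ a y = 0 := by
    intro a y hy; rw [hψ]; dsimp only; split_ifs with h
    · exfalso
      rw [Set.eq_empty_iff_forall_notMem] at h
      exact h y (by simpa using hy)
    · exact Metric.infDist_zero_of_mem (by simpa using hy)
  set S : K → ℝ := fun y => ∑ a ∈ t, ψ a y with hS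
  have hSpos : ∀ y, 0 < S y := by
    intro y
    obtain ⟨a, hat, hya⟩ := Set.mem_iUnion₂.mp (ht (Set.mem_univ y))
    exact Finset.sum_pos' (fun b _ => hψnonneg b y) ⟨a, hat, hψpos a y hya⟩
  refine ⟨fun y => (∑ a ∈ t, ψ a y * f a) / S y, ?_, ?_⟩
  · exact (continuous_finset_sum t fun a _ => (hψcont a).mul continuous_const).div
      (continuous_finset_sum t fun a _ => hψcont a) (fun y => (hSpos y).ne')
  · intro q hq y hyD
    have key : ∀ a ∈ t, ψ a y * |f a - f y| ≤ ψ a y * (1/(q.1+1:ℝ)) := by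
      intro a _
      rcases eq_or_lt_of_le (hψnonneg a y) with h0 | hpos
      · rw [← h0]; simp
      · have hyN : y ∈ N a := by
          by_contra hyN
          exact absurd (hψzero a y hyN) (ne_of_gt hpos)
        have haD : a ∈ Dreq f q := by
          by_contra haD
          have h1 := (hNprop a q hq).1 haD
          rw [Set.eq_empty_iff_forall_notMem] at h1
          exact h1 y ⟨hyN, hyD⟩
        have h2 := (hNprop a q hq).2 haD y ⟨hyN, hyD.2⟩
        have h3 : |f a - f y| ≤ 1/(q.1+1:ℝ) := by rw [abs_sub_comm]; exact h2.le
        exact mul_le_mul_of_nonneg_left h3 (hψnonneg a y)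
    have hnum : (∑ a ∈ t, ψ a y * f a) / S y - f y
        = (∑ a ∈ t, ψ a y * (f a - f y)) / S y := by
      rw [eq_div_iff (hSpos y).ne', sub_mul, div_mul_cancel₀ _ (hSpos y).ne']
      rw [Finset.mul_sum, ← Finset.sum_sub_distrib]
      exact Finset.sum_congr rfl fun a _ => by ring
    rw [hnum, abs_div, abs_of_pos (hSpos y), div_le_iff₀ (hSpos y)]
    calc |∑ a ∈ t, ψ a y * (f a - f y)| ≤ ∑ a ∈ t, |ψ a y * (f a - f y)| :=
          Finset.abs_sum_le_sum_abs _ _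
      _ = ∑ a ∈ t, ψ a y * |f a - f y| := by
          refine Finset.sum_congr rfl fun a _ => ?_
          rw [abs_mul, abs_of_nonneg (hψnonneg a y)]
      _ ≤ ∑ a ∈ t, ψ a y * (1/(q.1+1:ℝ)) := Finset.sum_le_sum key
      _ = (∑ a ∈ t, ψ a y) * (1/(q.1+1:ℝ)) := by rw [Finset.sum_mul]
      _ = 1/(q.1+1:ℝ) * S y := by rw [hS]; ring

end Glue

/-! ### Assembling the sequence and the two inclusions -/

section Main

variable {K : Type u} [MetricSpace K] [CompactSpace K] {f : K → ℝ}

theorem oscDeriv_zero (f : K → ℝ) (ε : ℝ) : oscDeriv f ε Set.univ (0 : Ordinal.{v}) = Set.univ := by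
  rw [oscDeriv_eq_gder.{u,v}, gder_zero]

theorem seqDeriv_zero (F : ℕ → K → ℝ) (ε : ℝ) : seqDeriv F ε Set.univ (0 : Ordinal.{v}) = Set.univ := by
  rw [seqDeriv_eq_gder.{u,v}, gder_zero]

theorem oscDeriv_succ (f : K → ℝ) (ε : ℝ) (γ : Ordinal.{v}) :
    oscDeriv f ε Set.univ (γ + 1) = oscStep f ε (oscDeriv f ε Set.univ γ) := by
  rw [oscDeriv_eq_gder.{u,v}, gder_succ, ← oscDeriv_eq_gder.{u,v}]

theorem seqDeriv_succ (F : ℕ → K → ℝ) (ε : ℝ) (γ : Ordinal.{v}) :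
    seqDeriv F ε Set.univ (γ + 1) = seqStep F ε (seqDeriv F ε Set.univ γ) := by
  rw [seqDeriv_eq_gder.{u,v}, gder_succ, ← seqDeriv_eq_gder.{u,v}]

theorem oscDeriv_limit (f : K → ℝ) (ε : ℝ) {γ : Ordinal.{v}} (hγ : Order.IsSuccLimit γ) :
    oscDeriv f ε Set.univ γ = ⋂ (β : Ordinal.{v}) (_ : β < γ), oscDeriv f ε Set.univ β := by
  rw [oscDeriv_eq_gder.{u,v}, gder_limit _ _ hγ]

theorem seqDeriv_limit (F : ℕ → K → ℝ) (ε : ℝ) {γ : Ordinal.{v}} (hγ : Order.IsSuccLimit γ) :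
    seqDeriv F ε Set.univ γ = ⋂ (β : Ordinal.{v}) (_ : β < γ), seqDeriv F ε Set.univ β := by
  rw [seqDeriv_eq_gder.{u,v}, gder_limit _ _ hγ]

def Tset (f : K → ℝ) : Set (ℕ × Ordinal.{v} × ℕ) := {q | Creq f q ≠ ∅}

theorem Tset_countable (hf : BaireOne f) : (Tset.{u,v} f).Countable := by
  refine Set.Countable.mono ?_
    (Set.countable_iUnion fun j : ℕ => Set.countable_iUnion fun s : ℕ =>
      Set.Countable.image
        (osc_stages_countable.{u,v} hf (show (0:ℝ) < 1/((j:ℝ)+1) by positivity))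
        (fun α => (j, α, s)))
  intro q hq
  exact Set.mem_iUnion.mpr ⟨q.1, Set.mem_iUnion.mpr ⟨q.2.2, ⟨q.2.1, hq, rfl⟩⟩⟩

theorem exists_F (hf : BaireOne f) :
    ∃ F : ℕ → K → ℝ, (∀ n, Continuous (F n)) ∧
      ∀ q ∈ Tset.{u,v} f, ∃ m : ℕ, ∀ n ≥ m, ∀ y ∈ Dreq f q, |F n y - f y| ≤ 1/(q.1+1 : ℝ) := by
  by_cases hne : (Tset.{u,v} f).Nonempty
  · obtain ⟨e, he⟩ := (Tset_countable hf).exists_eq_range hne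
    have hglue := fun n : ℕ => exists_glue f (Finset.image e (Finset.range (n+1)))
    choose F hFc hFest using hglue
    refine ⟨F, hFc, ?_⟩
    intro q hq
    rw [he] at hq
    obtain ⟨k, rfl⟩ := hq
    exact ⟨k, fun n hn y hy => hFest n (e k)
      (Finset.mem_image_of_mem e (Finset.mem_range.mpr (Nat.lt_succ_of_le hn))) y hy⟩
  · obtain ⟨g, hgc, -⟩ := exists_glue f (∅ : Finset (ℕ × Ordinal.{v} × ℕ))
    exact ⟨fun _ => g, fun _ => hgc, fun q hq => (hne ⟨q, hq⟩).elim⟩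

theorem mem_Dreq_of_exit (hf : BaireOne f) (x : K) (j : ℕ) :
    ∃ q : ℕ × Ordinal.{v} × ℕ, q.1 = j ∧ q ∈ Tset.{u,v} f ∧ x ∈ Dreq f q ∧ x ∈ Oreq f q := by
  have hδ : (0:ℝ) < 1/((j:ℝ)+1) := by positivity
  obtain ⟨α, hxin, hxout⟩ := osc_exit.{u,v} hf hδ x
  have hx : x ∈ tameSet f (1/((j:ℝ)+1)) (oscDeriv f (1/((j:ℝ)+1)) Set.univ α) := by
    rw [oscDeriv_succ] at hxout
    by_contra hxt
    apply hxout
    refine ⟨hxin, fun U hU hxU => ?_⟩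
    by_contra hpair
    push_neg at hpair
    exact hxt ⟨U, hU, hxU, fun a ha b hb => hpair a ha b hb⟩
  have hWs := iUnion_sliceO
    (isOpen_tameSet (f := f) (δ := 1/((j:ℝ)+1)) (C := oscDeriv f (1/((j:ℝ)+1)) Set.univ α))
  rw [← hWs] at hx
  obtain ⟨s, hs⟩ := Set.mem_iUnion.mp hx
  refine ⟨(j, α, s), rfl, ?_, ⟨sliceO_subset_sliceC hs, hxin⟩, hs⟩
  exact Set.Nonempty.ne_empty ⟨x, hxin⟩

theorem F_tendsto (hf : BaireOne f) {F : ℕ → K → ℝ}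
    (hsat : ∀ q ∈ Tset.{u,v} f, ∃ m, ∀ n ≥ m, ∀ y ∈ Dreq f q, |F n y - f y| ≤ 1/(q.1+1:ℝ))
    (x : K) :
    Filter.Tendsto (fun n => F n x) Filter.atTop (nhds (f x)) := by
  rw [Metric.tendsto_atTop]
  intro ε hε
  obtain ⟨j, hj⟩ := exists_nat_one_div_lt hε
  obtain ⟨q, hqj, hqT, hqD, -⟩ := mem_Dreq_of_exit.{u,v} hf x j
  obtain ⟨m, hm⟩ := hsat q hqT
  refine ⟨m, fun n hn => ?_⟩
  rw [Real.dist_eq]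
  calc |F n x - f x| ≤ 1/(q.1+1:ℝ) := hm n hn x hqD
    _ = 1/((j:ℝ)+1) := by rw [hqj]
    _ < ε := hj

theorem seq_subset_osc (hf : BaireOne f) {F : ℕ → K → ℝ}
    (hsat : ∀ q ∈ Tset.{u,v} f, ∃ m, ∀ n ≥ m, ∀ y ∈ Dreq f q, |F n y - f y| ≤ 1/(q.1+1:ℝ))
    {ε : ℝ} {j : ℕ} (hj : 2/((j:ℝ)+1) < ε) :
    ∀ α : Ordinal.{v}, seqDeriv F ε Set.univ α ⊆ oscDeriv f (1/((j:ℝ)+1)) Set.univ α := by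
  intro α
  induction α using Ordinal.induction with
  | _ α IH =>
    rcases Ordinal.zero_or_succ_or_isSuccLimit α with h0 | ⟨γ, hγ⟩ | hlim
    · subst h0; rw [seqDeriv_zero, oscDeriv_zero]
    · have hγ' : α = γ + 1 := by rw [← hγ, Ordinal.add_one_eq_succ]
      subst hγ'
      have hIH := IH γ (by rw [Ordinal.add_one_eq_succ]; exact Order.lt_succ γ)
      rw [seqDeriv_succ, oscDeriv_succ]
      rintro x ⟨hxS, hosc⟩
      refine ⟨hIH hxS, ?_⟩
      intro U hU hxU
      by_contra hpair
      push_neg at hpair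
      have hxtame : x ∈ tameSet f (1/((j:ℝ)+1)) (oscDeriv f (1/((j:ℝ)+1)) Set.univ γ) :=
        ⟨U, hU, hxU, hpair⟩
      have hWs := iUnion_sliceO
        (isOpen_tameSet (f := f) (δ := 1/((j:ℝ)+1)) (C := oscDeriv f (1/((j:ℝ)+1)) Set.univ γ))
      rw [← hWs] at hxtame
      obtain ⟨s, hs⟩ := Set.mem_iUnion.mp hxtame
      have hqT : ((j, γ, s) : ℕ × Ordinal.{v} × ℕ) ∈ Tset.{u,v} f :=
        Set.Nonempty.ne_empty ⟨x, hIH hxS⟩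
      obtain ⟨m, hm⟩ := hsat (j, γ, s) hqT
      obtain ⟨n₁, n₂, hmn₂, hn₂₁, x', hx'mem, hge⟩ :=
        hosc (Oreq f (j, γ, s)) (isOpen_Oreq f (j, γ, s)) hs m
      obtain ⟨hx'O, hx'S⟩ := hx'mem
      have hx'D : x' ∈ Dreq f (j, γ, s) := ⟨sliceO_subset_sliceC hx'O, hIH hx'S⟩
      have h1 := hm n₁ (le_of_lt (hmn₂.trans hn₂₁)) x' hx'D
      have h2 := hm n₂ (le_of_lt hmn₂) x' hx'D
      have h2' : |f x' - F n₂ x'| ≤ 1/((j:ℝ)+1) := by rw [abs_sub_comm]; exact h2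
      have hbound : |F n₁ x' - F n₂ x'| ≤ 2/((j:ℝ)+1) := by
        calc |F n₁ x' - F n₂ x'| ≤ |F n₁ x' - f x'| + |f x' - F n₂ x'| := abs_sub_le _ _ _
          _ ≤ 1/((j:ℝ)+1) + 1/((j:ℝ)+1) := add_le_add h1 h2'
          _ = 2/((j:ℝ)+1) := by ring
      linarith
    · rw [seqDeriv_limit _ _ hlim, oscDeriv_limit _ _ hlim]
      exact Set.iInter₂_mono fun β hβ => IH β hβ

theorem osc_subset_seq {F : ℕ → K → ℝ} (hFc : ∀ n, Continuous (F n))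
    (hFl : ∀ x, Filter.Tendsto (fun n => F n x) Filter.atTop (nhds (f x)))
    {ε : ℝ} (hε : 0 < ε) :
    ∀ α : Ordinal.{v}, oscDeriv f ε Set.univ α ⊆ seqDeriv F (ε/5) Set.univ α := by
  intro α
  induction α using Ordinal.induction with
  | _ α IH =>
    rcases Ordinal.zero_or_succ_or_isSuccLimit α with h0 | ⟨γ, hγ⟩ | hlim
    · subst h0; rw [seqDeriv_zero, oscDeriv_zero]
    · have hγ' : α = γ + 1 := by rw [← hγ, Ordinal.add_one_eq_succ]
      subst hγ'
      have hIH := IH γ (by rw [Ordinal.add_one_eq_succ]; exact Order.lt_succ γ)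
      rw [seqDeriv_succ, oscDeriv_succ]
      rintro x ⟨hxO, hpair⟩
      refine ⟨hIH hxO, ?_⟩
      intro U hU hxU m
      by_contra hno
      push_neg at hno
      have hclose : ∀ x' ∈ U ∩ seqDeriv F (ε/5) Set.univ γ, |f x' - F (m+1) x'| ≤ ε/5 := by
        intro x' hx'
        have htend : Filter.Tendsto (fun n => |F n x' - F (m+1) x'|) Filter.atTop
            (nhds (|f x' - F (m+1) x'|)) := ((hFl x').sub tendsto_const_nhds).abs
        refine le_of_tendsto htend ?_
        filter_upwards [Filter.eventually_ge_atTop (m+2)] with n hn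
        exact (hno n (m+1) (Nat.lt_succ_self m) (by omega) x' hx').le
      obtain ⟨r, hr, hball⟩ :=
        Metric.continuousAt_iff.mp (hFc (m+1)).continuousAt (ε/5) (by linarith)
      obtain ⟨x₁, hx₁, x₂, hx₂, hge⟩ := hpair (U ∩ Metric.ball x r)
        (hU.inter Metric.isOpen_ball) ⟨hxU, Metric.mem_ball_self hr⟩
      have hx₁S : x₁ ∈ U ∩ seqDeriv F (ε/5) Set.univ γ := ⟨hx₁.1.1, hIH hx₁.2⟩
      have hx₂S : x₂ ∈ U ∩ seqDeriv F (ε/5) Set.univ γ := ⟨hx₂.1.1, hIH hx₂.2⟩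
      have h1 := hclose x₁ hx₁S
      have h2 := hclose x₂ hx₂S
      have h3 : |F (m+1) x₁ - F (m+1) x| < ε/5 := by
        have := hball (show dist x₁ x < r from Metric.mem_ball.mp hx₁.1.2)
        rwa [Real.dist_eq] at this
      have h4 : |F (m+1) x₂ - F (m+1) x| < ε/5 := by
        have := hball (show dist x₂ x < r from Metric.mem_ball.mp hx₂.1.2)
        rwa [Real.dist_eq] at this
      have h1' : |f x₁ - F (m+1) x₁| ≤ ε/5 := h1
      have h2' : |F (m+1) x₂ - f x₂| ≤ ε/5 := by rw [abs_sub_comm]; exact h2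
      have h4' : |F (m+1) x - F (m+1) x₂| < ε/5 := by rw [abs_sub_comm]; exact h4
      have hchain : |f x₁ - f x₂| ≤ |f x₁ - F (m+1) x₁| + |F (m+1) x₁ - F (m+1) x|
          + |F (m+1) x - F (m+1) x₂| + |F (m+1) x₂ - f x₂| := by
        calc |f x₁ - f x₂| ≤ |f x₁ - F (m+1) x₁| + |F (m+1) x₁ - f x₂| := abs_sub_le _ _ _
          _ ≤ |f x₁ - F (m+1) x₁| + (|F (m+1) x₁ - F (m+1) x₂| + |F (m+1) x₂ - f x₂|) := by
              have := abs_sub_le (F (m+1) x₁) (F (m+1) x₂) (f x₂); linarith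
          _ ≤ |f x₁ - F (m+1) x₁| + (|F (m+1) x₁ - F (m+1) x| + |F (m+1) x - F (m+1) x₂|
              + |F (m+1) x₂ - f x₂|) := by
              have := abs_sub_le (F (m+1) x₁) (F (m+1) x) (F (m+1) x₂); linarith
          _ = _ := by ring
      linarith
    · rw [seqDeriv_limit _ _ hlim, oscDeriv_limit _ _ hlim]
      exact Set.iInter₂_mono fun β hβ => IH β hβ

theorem emptyIndex_le {S : Ordinal.{v} → Set K} {β : Ordinal.{v}} (h : S β = ∅) :
    emptyIndex S ≤ β := by
  rw [emptyIndex, dif_pos ⟨β, h⟩]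
  exact csInf_le (OrderBot.bddBelow _) h

theorem emptyIndex_empty {S : Ordinal.{v} → Set K} (h : ∃ β, S β = ∅) :
    S (emptyIndex S) = ∅ := by
  rw [emptyIndex, dif_pos h]
  obtain ⟨β, hβ⟩ := h
  exact csInf_mem (⟨β, hβ⟩ : {α : Ordinal.{v} | S α = ∅}.Nonempty)

end Main

end Stmt17
end Aux

theorem statement17 {K : Type*} [MetricSpace K] [CompactSpace K]
    (f : K → ℝ) (hf : BaireOne f) :
    ∃ F : ℕ → K → ℝ, (∀ n, Continuous (F n)) ∧
      (∀ x, Tendsto (fun n => F n x) atTop (nhds (f x))) ∧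
      gamma F = beta f := by
  classical
  obtain ⟨F, hFc, hsat⟩ := Stmt17.exists_F hf
  have hFl := Stmt17.F_tendsto hf hsat
  refine ⟨F, hFc, hFl, ?_⟩
  haveI : Nonempty {e : ℝ // 0 < e} := ⟨⟨1, one_pos⟩⟩
  have hgamma : gamma F = ⨆ ε : {e : ℝ // 0 < e}, gammaEpsOn F ε.1 Set.univ := rfl
  have hbeta : beta f = ⨆ ε : {e : ℝ // 0 < e}, betaEpsOn f ε.1 Set.univ := rfl
  apply le_antisymm
  · rw [hgamma]
    refine ciSup_le ?_
    rintro ⟨ε, hε⟩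
    obtain ⟨j, hj⟩ := exists_nat_one_div_lt (show (0:ℝ) < ε/2 by linarith)
    have hj2 : 2/((j:ℝ)+1) < ε := by
      have h0 : (0:ℝ) < (j:ℝ)+1 := by positivity
      rw [div_lt_iff₀ h0] at hj ⊢
      linarith
    have hOempty : oscDeriv f (1/((j:ℝ)+1)) Set.univ
        (betaEpsOn f (1/((j:ℝ)+1)) Set.univ) = ∅ :=
      Stmt17.emptyIndex_empty (Stmt17.osc_eventually_empty hf (by positivity))
    have hSempty : seqDeriv F ε Set.univ (betaEpsOn f (1/((j:ℝ)+1)) Set.univ) = ∅ :=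
      Set.subset_empty_iff.mp (hOempty ▸ Stmt17.seq_subset_osc hf hsat hj2 _)
    calc gammaEpsOn F ε Set.univ ≤ betaEpsOn f (1/((j:ℝ)+1)) Set.univ :=
          Stmt17.emptyIndex_le hSempty
      _ ≤ beta f := by
          rw [hbeta]
          exact le_ciSup (Ordinal.bddAbove_range _)
            (⟨1/((j:ℝ)+1), by positivity⟩ : {e : ℝ // 0 < e})
  · rw [hbeta]
    refine ciSup_le ?_
    rintro ⟨ε, hε⟩
    have hε5 : (0:ℝ) < ε/5 := by linarith
    obtain ⟨j, hj⟩ := exists_nat_one_div_lt (show (0:ℝ) < ε/10 by linarith)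
    have hj2 : 2/((j:ℝ)+1) < ε/5 := by
      have h0 : (0:ℝ) < (j:ℝ)+1 := by positivity
      rw [div_lt_iff₀ h0] at hj ⊢
      linarith
    obtain ⟨σ, hσ⟩ := Stmt17.osc_eventually_empty hf (show (0:ℝ) < 1/((j:ℝ)+1) by positivity)
    have hSex : ∃ β, seqDeriv F (ε/5) Set.univ β = ∅ :=
      ⟨σ, Set.subset_empty_iff.mp (hσ ▸ Stmt17.seq_subset_osc hf hsat hj2 σ)⟩
    have hSempty := Stmt17.emptyIndex_empty hSex
    have hOempty : oscDeriv f ε Set.univ (gammaEpsOn F (ε/5) Set.univ) = ∅ :=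
      Set.subset_empty_iff.mp (hSempty ▸ Stmt17.osc_subset_seq hFc hFl hε _)
    calc betaEpsOn f ε Set.univ ≤ gammaEpsOn F (ε/5) Set.univ :=
          Stmt17.emptyIndex_le hOempty
      _ ≤ gamma F := by
          rw [hgamma]
          exact le_ciSup (Ordinal.bddAbove_range _) (⟨ε/5, hε5⟩ : {e : ℝ // 0 < e})
end

section
/- Let K be a compact metric space, ξ a countable ordinal, f : K → ℝ bounded with β(f) ≤ ω^ξ, and (gₙ) a sequence of real-valued functions on K with γ((gₙ)) ≤ ω^ξ. Then γ((f·gₙ)) ≤ ω^ξ. -/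
open Filter Topology Set Ordinal

lemma seqDeriv_subset_of_osc {K : Type*} [TopologicalSpace K] {f₁ f₂ : ℕ → K → ℝ} {ε₁ ε₂ : ℝ}
    (h : ∀ x n₁ n₂, ε₁ ≤ |f₁ n₁ x - f₁ n₂ x| → ε₂ ≤ |f₂ n₁ x - f₂ n₂ x|)
    (H : Set K) (α : Ordinal) : seqDeriv f₁ ε₁ H α ⊆ seqDeriv f₂ ε₂ H α := by
  induction α using Ordinal.limitRecOn with
  | zero => simp only [seqDeriv, Ordinal.limitRecOn_zero]; exact subset_rfl
  | add_one α ih =>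
    simp only [seqDeriv, Ordinal.limitRecOn_add_one] at ih ⊢
    rintro x ⟨hxA, hU⟩
    refine ⟨ih hxA, fun U hUo hxU m => ?_⟩
    obtain ⟨n₁, n₂, h1, h2, x', ⟨hx'U, hx'A⟩, hosc⟩ := hU U hUo hxU m
    exact ⟨n₁, n₂, h1, h2, x', ⟨hx'U, ih hx'A⟩, h x' n₁ n₂ hosc⟩
  | limit α hlim ih =>
    simp only [seqDeriv, Ordinal.limitRecOn_limit _ _ _ _ hlim]
    intro x hx
    simp only [Set.mem_iInter] at hx ⊢
    exact fun β hβ => ih β hβ (hx β hβ)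

lemma emptyIndex_le {K : Type*} {S : Ordinal → Set K} {α : Ordinal} (h : S α = ∅) :
    emptyIndex S ≤ α := by
  rw [emptyIndex, dif_pos ⟨α, h⟩]
  exact csInf_le (OrderBot.bddBelow _) h

lemma omega0_opow_lt_omega1 {ξ : Ordinal} (hξ : ξ < (Cardinal.aleph 1).ord) :
    Ordinal.omega0 ^ ξ < (Cardinal.aleph 1).ord := by
  revert hξ
  induction ξ using Ordinal.limitRecOn with
  | zero =>
    intro _
    rw [opow_zero]
    refine lt_of_lt_of_le Ordinal.one_lt_omega0 ?_
    rw [← Cardinal.ord_aleph0]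
    exact Cardinal.ord_le_ord.2 (Cardinal.aleph0_le_aleph 1)
  | add_one β ih =>
    intro hξ
    have hβ : β < (Cardinal.aleph 1).ord := (Order.lt_succ β).trans hξ
    have h1 := ih hβ
    rw [opow_add_one, Cardinal.lt_ord, Ordinal.card_mul]
    rw [Cardinal.lt_ord] at h1
    exact Cardinal.mul_lt_of_lt (Cardinal.aleph0_le_aleph 1) h1
      (by rw [Ordinal.card_omega0]; exact Cardinal.aleph0_lt_aleph_one)
  | limit β hlim ih =>
    intro hξ
    rw [opow_limit Ordinal.omega0_ne_zero hlim]
    have hcof : β.card < ((Cardinal.aleph 1).ord).cof := by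
      rw [Cardinal.isRegular_aleph_one.cof_eq]
      exact Cardinal.lt_ord.1 hξ
    exact Ordinal.lift_iSup_lt_of_lt_cof (by simpa [Cardinal.mk_Iio_ordinal, ← Ordinal.lift_card] using hcof)
      fun i => ih i.1 i.2 (i.2.trans hξ)

theorem statement18 {K : Type*} [MetricSpace K] [CompactSpace K]
    (ξ : Ordinal) (hξ : ξ < (Cardinal.aleph 1).ord) (f : K → ℝ)
    (hfbd : ∃ M : ℝ, ∀ x, |f x| ≤ M) (hf : beta f ≤ Ordinal.omega0 ^ ξ)
    (g : ℕ → K → ℝ) (hg : gamma g ≤ Ordinal.omega0 ^ ξ) :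
    gamma (fun n x => f x * g n x) ≤ Ordinal.omega0 ^ ξ := by
  obtain ⟨M₀, hM₀⟩ := hfbd
  set M : ℝ := max M₀ 1 with hM
  have hMpos : (0 : ℝ) < M := lt_of_lt_of_le one_pos (le_max_right _ _)
  have hfM : ∀ x, |f x| ≤ M := fun x => (hM₀ x).trans (le_max_left _ _)
  rw [_root_.gamma, gammaOn] at hg ⊢
  apply Ordinal.iSup_le
  rintro ⟨ε, hε⟩
  have hosc : ∀ x n₁ n₂, ε ≤ |(fun n x => f x * g n x) n₁ x - (fun n x => f x * g n x) n₂ x| →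
      ε / M ≤ |g n₁ x - g n₂ x| := by
    intro x n₁ n₂ h
    simp only at h
    have key : |f x * g n₁ x - f x * g n₂ x| = |f x| * |g n₁ x - g n₂ x| := by
      rw [← abs_mul]
      congr 1
      ring
    rw [key] at h
    rw [div_le_iff₀ hMpos]
    calc ε ≤ |f x| * |g n₁ x - g n₂ x| := h
    _ ≤ M * |g n₁ x - g n₂ x| := by
        exact mul_le_mul_of_nonneg_right (hfM x) (abs_nonneg _)
    _ = |g n₁ x - g n₂ x| * M := mul_comm _ _
  have hg' : gammaEpsOn g (ε / M) Set.univ ≤ Ordinal.omega0 ^ ξ := by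
    refine le_trans ?_ hg
    exact le_ciSup (Ordinal.bddAbove_range _) (⟨ε / M, div_pos hε hMpos⟩ : {e : ℝ // 0 < e})
  have hex : ∃ α, seqDeriv g (ε / M) Set.univ α = ∅ := by
    by_contra hne
    rw [gammaEpsOn, emptyIndex, dif_neg hne] at hg'
    exact absurd hg' (not_le.2 (omega0_opow_lt_omega1 hξ))
  have hval : gammaEpsOn g (ε / M) Set.univ = sInf {α | seqDeriv g (ε / M) Set.univ α = ∅} := by
    rw [gammaEpsOn, emptyIndex, dif_pos hex]
  have hmem : seqDeriv g (ε / M) Set.univ (sInf {α | seqDeriv g (ε / M) Set.univ α = ∅}) = ∅ :=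
    csInf_mem (show {α | seqDeriv g (ε / M) Set.univ α = ∅}.Nonempty from hex)
  have hsub := seqDeriv_subset_of_osc hosc Set.univ (sInf {α | seqDeriv g (ε / M) Set.univ α = ∅})
  have hempty : seqDeriv (fun n x => f x * g n x) ε Set.univ
      (sInf {α | seqDeriv g (ε / M) Set.univ α = ∅}) = ∅ :=
    Set.subset_empty_iff.1 (hsub.trans hmem.subset)
  exact le_trans (emptyIndex_le hempty) (hval ▸ hg')
end
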